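/- arXiv:2010.16225 — 8 statements merged into one kernel-verified Lean document; each statement's English description precedes it below -/
import Mathlib

section
/- Let t be a positive integer and let F = {x ∈ ℝ : ∃ m, e ∈ ℤ with |m| ≤ 2^t − 1 and x = m · 2^e} be the set of binary floating-point numbers with t-bit significands (unbounded exponent). If a, b, c ∈ F and max(|a − b|, |b − c|) ≤ min(|a|, |b|, |c|), then both a − b ∈ F and b − c ∈ F (i.e. the two first-order differences are exactly representable, hence computed exactly). -/
/-- Auxiliary: assuming `e1 ≤ e2` and the difference is bounded by `|m1 * 2^e1|`,
the difference is representable with exponent `e1`. -/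
lemma aux_diff_repr (t : ℕ) (m1 m2 e1 e2 : ℤ) (h1 : |m1| ≤ 2 ^ t - 1) (he : e1 ≤ e2)
    (hd : |(m1 : ℝ) * (2:ℝ) ^ e1 - (m2 : ℝ) * (2:ℝ) ^ e2| ≤ |(m1 : ℝ) * (2:ℝ) ^ e1|) :
    ∃ m e : ℤ, |m| ≤ 2 ^ t - 1 ∧
      (m1 : ℝ) * (2:ℝ) ^ e1 - (m2 : ℝ) * (2:ℝ) ^ e2 = (m : ℝ) * (2:ℝ) ^ e := by
  set k : ℕ := (e2 - e1).toNat with hk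
  have hk' : e2 = e1 + (k : ℤ) := by omega
  refine ⟨m1 - m2 * 2 ^ k, e1, ?_, ?_⟩
  · -- bound
    have hpow : (0:ℝ) < (2:ℝ) ^ e1 := zpow_pos (by norm_num) _
    have heq : (m1 : ℝ) * (2:ℝ) ^ e1 - (m2 : ℝ) * (2:ℝ) ^ e2
        = ((m1 - m2 * 2 ^ k : ℤ) : ℝ) * (2:ℝ) ^ e1 := by
      have : (2:ℝ) ^ e2 = (2:ℝ) ^ (k : ℤ) * (2:ℝ) ^ e1 := by
        rw [← zpow_add₀ (by norm_num : (2:ℝ) ≠ 0)]; congr 1; omega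
      rw [this, zpow_natCast]; push_cast; ring
    rw [heq] at hd
    rw [abs_mul, abs_mul, abs_of_pos hpow] at hd
    have hc : |((m1 - m2 * 2 ^ k : ℤ) : ℝ)| ≤ |(m1 : ℝ)| := le_of_mul_le_mul_right hd hpow
    have : |(m1 - m2 * 2 ^ k : ℤ)| ≤ |m1| := by exact_mod_cast hc
    exact this.trans h1
  · have : (2:ℝ) ^ e2 = (2:ℝ) ^ (k : ℤ) * (2:ℝ) ^ e1 := by
      rw [← zpow_add₀ (by norm_num : (2:ℝ) ≠ 0)]; congr 1; omega
    rw [this, zpow_natCast]; push_cast; ring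

lemma key_diff (t : ℕ) (x y : ℝ)
    (hx : ∃ m e : ℤ, |m| ≤ 2 ^ t - 1 ∧ x = (m : ℝ) * (2:ℝ) ^ e)
    (hy : ∃ m e : ℤ, |m| ≤ 2 ^ t - 1 ∧ y = (m : ℝ) * (2:ℝ) ^ e)
    (hdx : |x - y| ≤ |x|) (hdy : |x - y| ≤ |y|) :
    ∃ m e : ℤ, |m| ≤ 2 ^ t - 1 ∧ x - y = (m : ℝ) * (2:ℝ) ^ e := by
  obtain ⟨m1, e1, h1, rfl⟩ := hx
  obtain ⟨m2, e2, h2, rfl⟩ := hy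
  rcases le_total e1 e2 with he | he
  · exact aux_diff_repr t m1 m2 e1 e2 h1 he hdx
  · obtain ⟨m, e, hm, heq⟩ := aux_diff_repr t m2 m1 e2 e1 h2 he (by rwa [abs_sub_comm])
    refine ⟨-m, e, by simpa using hm, ?_⟩
    have : (m2 : ℝ) * (2:ℝ) ^ e2 - (m1 : ℝ) * (2:ℝ) ^ e1 = (m : ℝ) * (2:ℝ) ^ e := heq
    push_cast
    linarith

/-- If `a, b, c` are binary floating-point numbers with `t`-bit
significands (unbounded exponent) and `max (|a-b|, |b-c|) ≤ min (|a|,|b|,|c|)`,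
then `a - b` and `b - c` are exactly representable. -/
theorem first_order_differences_exact (t : ℕ) (ht : 0 < t)
    (F : Set ℝ)
    (hF : F = {x : ℝ | ∃ m e : ℤ, |m| ≤ 2 ^ t - 1 ∧ x = (m : ℝ) * (2 : ℝ) ^ e})
    (a b c : ℝ) (ha : a ∈ F) (hb : b ∈ F) (hc : c ∈ F)
    (h : max |a - b| |b - c| ≤ min |a| (min |b| |c|)) :
    a - b ∈ F ∧ b - c ∈ F := by
  subst hF
  simp only [Set.mem_setOf_eq] at *
  have h1 : |a - b| ≤ |a| := le_trans (le_trans (le_max_left _ _) h) (min_le_left _ _)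
  have h2 : |a - b| ≤ |b| :=
    le_trans (le_trans (le_max_left _ _) h) (le_trans (min_le_right _ _) (min_le_left _ _))
  have h3 : |b - c| ≤ |b| :=
    le_trans (le_trans (le_max_right _ _) h) (le_trans (min_le_right _ _) (min_le_left _ _))
  have h4 : |b - c| ≤ |c| :=
    le_trans (le_trans (le_max_right _ _) h) (le_trans (min_le_right _ _) (min_le_right _ _))
  exact ⟨key_diff t a b ha hb h1 h2, key_diff t b c hb hc h3 h4⟩
end

section
/- Let t be a positive integer and let F = {x ∈ ℝ : ∃ m, e ∈ ℤ with |m| ≤ 2^t − 1 and x = m · 2^e}. If a, b, c ∈ F satisfy max(|a − b|, |b − c|) ≤ min(|a|, |b|, |c|) and the differences a − b and b − c have the same sign (i.e. (a − b)(b − c) ≥ 0), then (a − b) − (b − c) ∈ F, i.e. the second-order difference is exactly representable. -/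
private lemma abs_sub_le_max_of_sign (x y : ℝ) (h : 0 ≤ x * y) :
    |x - y| ≤ max |x| |y| := by
  rcases mul_nonneg_iff.mp h with ⟨hx, hy⟩ | ⟨hx, hy⟩ <;>
    rw [abs_sub_le_iff] <;> constructor <;>
    [exact le_max_of_le_left (by rw [abs_of_nonneg hx]; linarith);
     exact le_max_of_le_right (by rw [abs_of_nonneg hy]; linarith);
     exact le_max_of_le_right (by rw [abs_of_nonpos hy]; linarith);
     exact le_max_of_le_left (by rw [abs_of_nonpos hx]; linarith)]

private lemma cast_pow_toNat (m e₀ e : ℤ) (he : e ≤ e₀) :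
    ((m * 2 ^ (e₀ - e).toNat : ℤ) : ℝ) * (2 : ℝ) ^ (e : ℤ) = (m : ℝ) * (2 : ℝ) ^ e₀ := by
  push_cast
  rw [mul_assoc, ← zpow_natCast (2 : ℝ), ← zpow_add₀ (by norm_num : (2:ℝ) ≠ 0)]
  congr 1
  congr 1
  omega

/-- If `a, b, c` are binary floating-point numbers with `t`-bit
significands, `max (|a-b|, |b-c|) ≤ min (|a|,|b|,|c|)`, and the differences
`a - b` and `b - c` have the same sign, then the second-order difference
`(a - b) - (b - c)` is exactly representable. -/
theorem second_order_difference_exact_same_sign (t : ℕ) (ht : 0 < t)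
    (F : Set ℝ)
    (hF : F = {x : ℝ | ∃ m e : ℤ, |m| ≤ 2 ^ t - 1 ∧ x = (m : ℝ) * (2 : ℝ) ^ e})
    (a b c : ℝ) (ha : a ∈ F) (hb : b ∈ F) (hc : c ∈ F)
    (h : max |a - b| |b - c| ≤ min |a| (min |b| |c|))
    (hsign : 0 ≤ (a - b) * (b - c)) :
    (a - b) - (b - c) ∈ F := by
  subst hF
  obtain ⟨ma, ea, hma, rfl⟩ := ha
  obtain ⟨mb, eb, hmb, rfl⟩ := hb
  obtain ⟨mc, ec, hmc, rfl⟩ := hc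
  set a : ℝ := (ma : ℝ) * 2 ^ ea with ha'
  set b : ℝ := (mb : ℝ) * 2 ^ eb with hb'
  set c : ℝ := (mc : ℝ) * 2 ^ ec with hc'
  set e : ℤ := min ea (min (eb + 1) ec) with he
  have hea : e ≤ ea := min_le_left _ _
  have heb : e ≤ eb + 1 := le_trans (min_le_right _ _) (min_le_left _ _)
  have hec : e ≤ ec := le_trans (min_le_right _ _) (min_le_right _ _)
  set M : ℤ := ma * 2 ^ (ea - e).toNat - mb * 2 ^ (eb + 1 - e).toNat
      + mc * 2 ^ (ec - e).toNat with hM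
  have hpow : ∀ k : ℤ, (0:ℝ) < 2 ^ k := fun k => zpow_pos (by norm_num) k
  have hd : (a - b) - (b - c) = (M : ℝ) * 2 ^ e := by
    have h1 := cast_pow_toNat ma ea e hea
    have h2 := cast_pow_toNat mb (eb + 1) e heb
    have h3 := cast_pow_toNat mc ec e hec
    have hb2 : ((mb * 2 ^ (eb + 1 - e).toNat : ℤ) : ℝ) * (2:ℝ) ^ e = 2 * b := by
      rw [h2, hb', zpow_add₀ (by norm_num : (2:ℝ) ≠ 0)]; ring
    have hM' : (M:ℝ) = ((ma * 2 ^ (ea - e).toNat : ℤ) : ℝ)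
        - ((mb * 2 ^ (eb + 1 - e).toNat : ℤ) : ℝ) + ((mc * 2 ^ (ec - e).toNat : ℤ) : ℝ) := by
      rw [hM]; push_cast; ring
    rw [hM', add_mul, sub_mul, h1, h3, hb2, ha', hc']
    ring
  -- bound |a - 2b + c| ≤ (2^t - 1) * 2^e
  have habs : |(a - b) - (b - c)| ≤ ((2:ℝ) ^ t - 1) * 2 ^ e := by
    have hmax : |(a - b) - (b - c)| ≤ max |a - b| |b - c| :=
      abs_sub_le_max_of_sign _ _ hsign
    have hmin : |(a - b) - (b - c)| ≤ min |a| (min |b| |c|) := le_trans hmax h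
    have hba : |a| ≤ ((2:ℝ)^t - 1) * 2 ^ ea := by
      rw [ha', abs_mul, abs_of_pos (hpow ea)]
      have : |(ma:ℝ)| ≤ (2:ℝ)^t - 1 := by exact_mod_cast hma
      exact mul_le_mul_of_nonneg_right this (le_of_lt (hpow ea))
    have hbb : |b| ≤ ((2:ℝ)^t - 1) * 2 ^ eb := by
      rw [hb', abs_mul, abs_of_pos (hpow eb)]
      have : |(mb:ℝ)| ≤ (2:ℝ)^t - 1 := by exact_mod_cast hmb
      exact mul_le_mul_of_nonneg_right this (le_of_lt (hpow eb))
    have hbc : |c| ≤ ((2:ℝ)^t - 1) * 2 ^ ec := by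
      rw [hc', abs_mul, abs_of_pos (hpow ec)]
      have : |(mc:ℝ)| ≤ (2:ℝ)^t - 1 := by exact_mod_cast hmc
      exact mul_le_mul_of_nonneg_right this (le_of_lt (hpow ec))
    have ht1 : (0:ℝ) ≤ (2:ℝ)^t - 1 := by
      have : (1:ℝ) ≤ 2 ^ t := one_le_pow₀ (by norm_num)
      linarith
    have hmono : ∀ k l : ℤ, k ≤ l → (2:ℝ)^k ≤ (2:ℝ)^l := fun k l hkl =>
      zpow_le_zpow_right₀ (by norm_num) hkl
    rcases le_total ea (min (eb + 1) ec) with h1 | h1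
    · -- e = ea
      have : e = ea := min_eq_left h1
      calc |(a - b) - (b - c)| ≤ |a| := le_trans hmin (min_le_left _ _)
        _ ≤ ((2:ℝ)^t - 1) * 2 ^ ea := hba
        _ = ((2:ℝ)^t - 1) * 2 ^ e := by rw [this]
    · rcases le_total (eb + 1) ec with h2 | h2
      · have he' : e = eb + 1 := by rw [he, min_eq_right h1, min_eq_left h2]
        have : eb ≤ e := by omega
        calc |(a - b) - (b - c)| ≤ |b| :=
              le_trans hmin (le_trans (min_le_right _ _) (min_le_left _ _))
          _ ≤ ((2:ℝ)^t - 1) * 2 ^ eb := hbb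
          _ ≤ ((2:ℝ)^t - 1) * 2 ^ e :=
              mul_le_mul_of_nonneg_left (hmono _ _ this) ht1
      · have he' : e = ec := by rw [he, min_eq_right h1, min_eq_right h2]
        calc |(a - b) - (b - c)| ≤ |c| :=
              le_trans hmin (le_trans (min_le_right _ _) (min_le_right _ _))
          _ ≤ ((2:ℝ)^t - 1) * 2 ^ ec := hbc
          _ = ((2:ℝ)^t - 1) * 2 ^ e := by rw [he']
  refine ⟨M, e, ?_, hd⟩
  have hMr : |(M:ℝ)| ≤ (2:ℝ)^t - 1 := by
    have := habs
    rw [hd, abs_mul, abs_of_pos (hpow e)] at this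
    exact le_of_mul_le_mul_right this (hpow e)
  exact_mod_cast hMr
end

section
/- Let t be a positive integer and let F = {x ∈ ℝ : ∃ m, e ∈ ℤ with |m| ≤ 2^t − 1 and x = m · 2^e}. If a, b, c ∈ F satisfy max(|a − b|, |b − c|) ≤ (1/2) · min(|a|, |b|, |c|), then a − b ∈ F, b − c ∈ F, and (a − b) − (b − c) ∈ F, i.e. both first-order differences and the second-order difference are exactly representable. -/
lemma fp_mem_aux (t : ℕ) (x : ℝ) (k e : ℤ) (hx : x = (k : ℝ) * (2:ℝ) ^ e)
    (hb : |x| ≤ ((2:ℝ) ^ t - 1) * (2:ℝ) ^ e) :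
    ∃ m e' : ℤ, |m| ≤ 2 ^ t - 1 ∧ x = (m : ℝ) * (2 : ℝ) ^ e' := by
  refine ⟨k, e, ?_, hx⟩
  have h2 : (0:ℝ) < (2:ℝ) ^ e := by positivity
  have hk : |(k:ℝ)| ≤ (2:ℝ) ^ t - 1 := by
    rw [hx, abs_mul, abs_of_pos h2] at hb
    exact le_of_mul_le_mul_right hb h2
  have : |(k:ℝ)| ≤ (((2:ℤ) ^ t - 1 : ℤ) : ℝ) := by push_cast; linarith
  exact_mod_cast this

lemma fp_mult_aux (m e f : ℤ) (hef : f ≤ e) :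
    ∃ k : ℤ, (m:ℝ) * (2:ℝ) ^ e = (k:ℝ) * (2:ℝ) ^ f := by
  refine ⟨m * 2 ^ (e - f).toNat, ?_⟩
  push_cast
  rw [mul_assoc]
  congr 1
  rw [← zpow_natCast (2:ℝ), Int.toNat_of_nonneg (by linarith),
    ← zpow_add₀ (two_ne_zero)]
  congr 1; ring

/-- If `a, b, c` are binary floating-point numbers with `t`-bit
significands and `max (|a-b|, |b-c|) ≤ (1/2) * min (|a|,|b|,|c|)`, then both
first-order differences and the second-order difference are exactly representable. -/
theorem differences_exact_half_condition (t : ℕ) (ht : 0 < t)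
    (F : Set ℝ)
    (hF : F = {x : ℝ | ∃ m e : ℤ, |m| ≤ 2 ^ t - 1 ∧ x = (m : ℝ) * (2 : ℝ) ^ e})
    (a b c : ℝ) (ha : a ∈ F) (hb : b ∈ F) (hc : c ∈ F)
    (h : max |a - b| |b - c| ≤ (1 / 2) * min |a| (min |b| |c|)) :
    a - b ∈ F ∧ b - c ∈ F ∧ (a - b) - (b - c) ∈ F := by
  subst hF
  obtain ⟨ma, ea, hma, hae⟩ := ha
  obtain ⟨mb, eb, hmb, hbe⟩ := hb
  obtain ⟨mc, ec, hmc, hce⟩ := hc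
  set e : ℤ := min ea (min eb ec) with he
  obtain ⟨ka, hka⟩ := fp_mult_aux ma ea e (by omega)
  obtain ⟨kb, hkb⟩ := fp_mult_aux mb eb e (by omega)
  obtain ⟨kc, hkc⟩ := fp_mult_aux mc ec e (by omega)
  have hae' : a = (ka:ℝ) * (2:ℝ) ^ e := by rw [hae, hka]
  have hbe' : b = (kb:ℝ) * (2:ℝ) ^ e := by rw [hbe, hkb]
  have hce' : c = (kc:ℝ) * (2:ℝ) ^ e := by rw [hce, hkc]
  set M : ℝ := min |a| (min |b| |c|) with hM
  have hM0 : 0 ≤ M := le_min (abs_nonneg _) (le_min (abs_nonneg _) (abs_nonneg _))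
  -- bound M by (2^t - 1) * 2^e
  have hcast : (((2:ℤ) ^ t - 1 : ℤ) : ℝ) = (2:ℝ) ^ t - 1 := by push_cast; ring
  have habs : ∀ (m f : ℤ), |m| ≤ (2:ℤ) ^ t - 1 →
      |(m:ℝ) * (2:ℝ) ^ f| ≤ ((2:ℝ) ^ t - 1) * (2:ℝ) ^ f := by
    intro m f hm
    rw [abs_mul, abs_of_pos (by positivity : (0:ℝ) < (2:ℝ) ^ f)]
    have : |(m:ℝ)| ≤ (2:ℝ) ^ t - 1 := by
      rw [← hcast]; exact_mod_cast hm
    exact mul_le_mul_of_nonneg_right this (by positivity)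
  have hMb : M ≤ ((2:ℝ) ^ t - 1) * (2:ℝ) ^ e := by
    have hcases : e = ea ∨ e = eb ∨ e = ec := by omega
    rcases hcases with h1 | h1 | h1
    · calc M ≤ |a| := min_le_left _ _
        _ ≤ _ := by rw [hae, h1]; exact habs _ _ hma
    · calc M ≤ |b| := le_trans (min_le_right _ _) (min_le_left _ _)
        _ ≤ _ := by rw [hbe, h1]; exact habs _ _ hmb
    · calc M ≤ |c| := le_trans (min_le_right _ _) (min_le_right _ _)
        _ ≤ _ := by rw [hce, h1]; exact habs _ _ hmc
  have h1 : |a - b| ≤ (1/2) * M := le_trans (le_max_left _ _) h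
  have h2 : |b - c| ≤ (1/2) * M := le_trans (le_max_right _ _) h
  refine ⟨?_, ?_, ?_⟩
  · refine fp_mem_aux t _ (ka - kb) e ?_ ?_
    · rw [hae', hbe']; push_cast; ring
    · linarith
  · refine fp_mem_aux t _ (kb - kc) e ?_ ?_
    · rw [hbe', hce']; push_cast; ring
    · linarith
  · refine fp_mem_aux t _ (ka - 2 * kb + kc) e ?_ ?_
    · rw [hae', hbe', hce']; push_cast; ring
    · have : |(a - b) - (b - c)| ≤ |a - b| + |b - c| := abs_sub _ _
      linarith
end

section
/- For every integer K ≥ 1, the triple sum satisfies Σ_{k₁=1}^{K} Σ_{k₂=1}^{K} Σ_{k₃=1}^{K} 1/(k₁² + k₂² + k₃²) ≤ (√3·π/2)·K − π/2 + 1/3. -/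
open Real Set intervalIntegral MeasureTheory
open scoped Finset

/-! The lattice points `k ∈ {1,…,K}³` with `‖k‖² ≤ t` number at most `π t^{3/2} / 6`, the volume of
an octant of the ball of radius `√t`: slice by slice, a sum over an antitone profile is bounded by
its integral. Writing `1 / ‖k‖² = 1 / M + ∫_{‖k‖²}^M t⁻² dt` with `M = 3K²` and summing over `k`,
the counting bound gives `∑ 1 / ‖k‖² ≤ K³ / M + ∫_3^M (π / 6) t^{-1/2} dt = K / 3 + (π / √3)(K - 1)`.
-/

theorem integral_sqrt_sq_sub_sq {r : ℝ} (hr : 0 ≤ r) :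
    ∫ x in (0 : ℝ)..r, √(r ^ 2 - x ^ 2) = π / 4 * r ^ 2 :=
  calc ∫ x in (0 : ℝ)..r, √(r ^ 2 - x ^ 2)
      = ∫ x in r * sin 0..r * sin (π / 2), √(r ^ 2 - x ^ 2) := by simp
    _ = ∫ θ in (0 : ℝ)..π / 2, √(r ^ 2 - (r * sin θ) ^ 2) * (r * cos θ) :=
      (integral_comp_mul_deriv (fun θ _ => (hasDerivAt_sin θ).const_mul r)
        (by fun_prop) (by fun_prop)).symm
    _ = ∫ θ in (0 : ℝ)..π / 2, r ^ 2 * cos θ ^ 2 := by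
      refine integral_congr fun θ hθ => ?_
      rw [uIcc_of_le (by positivity)] at hθ
      have hcos : 0 ≤ cos θ := cos_nonneg_of_mem_Icc ⟨by linarith [hθ.1, pi_pos], hθ.2⟩
      have : r ^ 2 - (r * sin θ) ^ 2 = (r * cos θ) ^ 2 := by
        linear_combination (-r ^ 2) * cos_sq_add_sin_sq θ
      simp only [this, sqrt_sq (mul_nonneg hr hcos)]
      ring
    _ = π / 4 * r ^ 2 := by simp; ring

theorem integral_one_div_sq {a b : ℝ} (ha : 0 < a) (hb : 0 < b) :
    ∫ t in a..b, 1 / t ^ 2 = 1 / a - 1 / b := by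
  have h0 : (0 : ℝ) ∉ uIcc a b := fun h => (lt_min ha hb).not_ge h.1
  simp only [one_div, ← zpow_natCast, ← zpow_neg]
  rw [integral_zpow (Or.inr ⟨by norm_num, h0⟩)]
  norm_num
  ring

theorem intervalIntegrable_div_sqrt {a b : ℝ} (ha : 0 < a) (hb : 0 < b) (C : ℝ) :
    IntervalIntegrable (fun t => C / √t) volume a b :=
  ContinuousOn.intervalIntegrable fun _ ht =>
    (continuousAt_const.div continuous_sqrt.continuousAt
      (sqrt_pos.mpr ((lt_min ha hb).trans_le ht.1)).ne').continuousWithinAt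

theorem integral_div_sqrt {a b : ℝ} (ha : 0 < a) (hb : 0 < b) (C : ℝ) :
    ∫ t in a..b, C / √t = 2 * C * (√b - √a) := by
  rw [integral_eq_sub_of_hasDerivAt (f := fun t => 2 * C * √t) (fun t ht => ?_)
    (intervalIntegrable_div_sqrt ha hb C)]
  · ring
  · have ht : 0 < t := (lt_min ha hb).trans_le ht.1
    have hs : √t ≠ 0 := (sqrt_pos.mpr ht).ne'
    refine ((hasDerivAt_sqrt ht.ne').const_mul (2 * C)).congr_deriv ?_
    field_simp

theorem sum_Icc_le_integral_of_antitoneOn {f : ℝ → ℝ} {r : ℝ} (hf : AntitoneOn f (Ici 0))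
    (hr : 0 ≤ r) (hf_zero : ∀ x, r ≤ x → f x = 0) (K : ℕ) :
    ∑ k ∈ Finset.Icc 1 K, f k ≤ ∫ x in (0 : ℝ)..r, f x := by
  have hint : ∀ b c : ℝ, 0 ≤ b → 0 ≤ c → IntervalIntegrable f volume b c := fun b c hb hc =>
    (hf.mono fun x hx => le_trans (le_min hb hc) hx.1).intervalIntegrable
  have hsum : ∑ k ∈ Finset.Icc 1 K, f k ≤ ∫ x in (0 : ℝ)..K, f x := by
    have := AntitoneOn.sum_le_integral (x₀ := 0) (a := K) (hf.mono Icc_subset_Ici_self)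
    rw [← Finset.Ico_add_one_right_eq_Icc, Finset.sum_Ico_eq_sum_range]
    simpa [add_comm] using this
  refine hsum.trans ?_
  rcases le_total (K : ℝ) r with hKr | hrK
  · refine integral_mono_interval le_rfl K.cast_nonneg hKr ?_ (hint 0 r le_rfl hr)
    refine (ae_restrict_mem measurableSet_Ioc).mono fun x hx => ?_
    change 0 ≤ f x
    rw [← hf_zero (max x r) (le_max_right x r)]
    exact hf hx.1.le (hx.1.le.trans (le_max_left x r)) (le_max_left x r)
  · have htail : ∫ x in r..K, f x = 0 := by
      rw [integral_congr (g := fun _ => 0) fun x hx => hf_zero x (uIcc_of_le hrK ▸ hx).1]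
      simp
    rw [← integral_add_adjacent_intervals (hint 0 r le_rfl hr) (hint r K hr K.cast_nonneg),
      htail, add_zero]

theorem sum_Icc_ite_sq_le (K : ℕ) (s : ℝ) :
    ∑ k ∈ Finset.Icc 1 K, (if (k : ℝ) ^ 2 ≤ s then (1 : ℝ) else 0) ≤ √s := by
  rw [Finset.sum_boole]
  have hsub : {k ∈ Finset.Icc 1 K | ((k : ℕ) : ℝ) ^ 2 ≤ s} ⊆ Finset.Icc 1 ⌊√s⌋₊ := by
    intro k hk
    simp only [Finset.mem_filter, Finset.mem_Icc] at hk ⊢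
    exact ⟨hk.1.1, Nat.le_floor (le_sqrt_of_sq_le hk.2)⟩
  calc (#{k ∈ Finset.Icc 1 K | ((k : ℕ) : ℝ) ^ 2 ≤ s} : ℝ) ≤ #(Finset.Icc 1 ⌊√s⌋₊) := by
        exact_mod_cast Finset.card_le_card hsub
    _ = ⌊√s⌋₊ := by simp
    _ ≤ √s := Nat.floor_le (sqrt_nonneg s)

theorem sum_Icc_ite_sq_add_sq_le (K : ℕ) (s : ℝ) :
    ∑ k₁ ∈ Finset.Icc 1 K, ∑ k₂ ∈ Finset.Icc 1 K,
      (if (k₁ : ℝ) ^ 2 + (k₂ : ℝ) ^ 2 ≤ s then (1 : ℝ) else 0) ≤ π / 4 * max s 0 := by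
  rcases lt_or_ge s 0 with hs | hs
  · rw [max_eq_right hs.le, mul_zero]
    exact Finset.sum_nonpos fun _ _ => Finset.sum_nonpos fun _ _ =>
      (if_neg (not_le.mpr (hs.trans_le (by positivity)))).le
  obtain ⟨r, hr, rfl⟩ : ∃ r, 0 ≤ r ∧ s = r ^ 2 := ⟨√s, sqrt_nonneg s, (sq_sqrt hs).symm⟩
  have hanti : AntitoneOn (fun x => √(r ^ 2 - x ^ 2)) (Ici 0) := fun x hx y _ hxy =>
    sqrt_le_sqrt (sub_le_sub_left (pow_le_pow_left₀ hx hxy 2) _)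
  have hzero : ∀ x, r ≤ x → √(r ^ 2 - x ^ 2) = 0 := fun x hx =>
    sqrt_eq_zero'.mpr (sub_nonpos.mpr (pow_le_pow_left₀ hr hx 2))
  calc _ ≤ ∑ k₁ ∈ Finset.Icc 1 K, √(r ^ 2 - (k₁ : ℝ) ^ 2) := Finset.sum_le_sum fun k₁ _ => by
        have := sum_Icc_ite_sq_le K (r ^ 2 - (k₁ : ℝ) ^ 2)
        simp_rw [le_sub_iff_add_le'] at this
        exact this
    _ ≤ ∫ x in (0 : ℝ)..r, √(r ^ 2 - x ^ 2) := sum_Icc_le_integral_of_antitoneOn hanti hr hzero K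
    _ = π / 4 * max (r ^ 2) 0 := by rw [integral_sqrt_sq_sub_sq hr, max_eq_left (sq_nonneg r)]

theorem sum_Icc_ite_sq_add_sq_add_sq_le (K : ℕ) {t : ℝ} (ht : 0 ≤ t) :
    ∑ k₁ ∈ Finset.Icc 1 K, ∑ k₂ ∈ Finset.Icc 1 K, ∑ k₃ ∈ Finset.Icc 1 K,
      (if (k₁ : ℝ) ^ 2 + (k₂ : ℝ) ^ 2 + (k₃ : ℝ) ^ 2 ≤ t then (1 : ℝ) else 0)
      ≤ π / 6 * t * √t := by
  obtain ⟨r, hr, rfl⟩ : ∃ r, 0 ≤ r ∧ t = r ^ 2 := ⟨√t, sqrt_nonneg t, (sq_sqrt ht).symm⟩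
  have hanti : AntitoneOn (fun x => π / 4 * max (r ^ 2 - x ^ 2) 0) (Ici 0) :=
    fun x hx y _ hxy => by dsimp only; gcongr
  have hzero : ∀ x, r ≤ x → π / 4 * max (r ^ 2 - x ^ 2) 0 = 0 := fun x hx => by
    rw [max_eq_right (sub_nonpos.mpr (pow_le_pow_left₀ hr hx 2)), mul_zero]
  calc _ ≤ ∑ k₁ ∈ Finset.Icc 1 K, π / 4 * max (r ^ 2 - (k₁ : ℝ) ^ 2) 0 :=
        Finset.sum_le_sum fun k₁ _ => by
          have := sum_Icc_ite_sq_add_sq_le K (r ^ 2 - (k₁ : ℝ) ^ 2)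
          simp_rw [le_sub_iff_add_le', ← add_assoc] at this
          exact this
    _ ≤ ∫ x in (0 : ℝ)..r, π / 4 * max (r ^ 2 - x ^ 2) 0 :=
        sum_Icc_le_integral_of_antitoneOn hanti hr hzero K
    _ = π / 4 * ∫ x in (0 : ℝ)..r, (r ^ 2 - x ^ 2) := by
        rw [← intervalIntegral.integral_const_mul]
        refine integral_congr fun x hx => ?_
        rw [uIcc_of_le hr] at hx
        simp only [max_eq_left (sub_nonneg.mpr (pow_le_pow_left₀ hx.1 hx.2 2))]
    _ = π / 6 * r ^ 2 * √(r ^ 2) := by rw [sqrt_sq hr]; simp [integral_pow]; ring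

theorem intervalIntegrable_div_sq_of_monotone {g : ℝ → ℝ} (hg : Monotone g) {a b : ℝ}
    (ha : 0 < a) (hb : 0 < b) : IntervalIntegrable (fun t => g t / t ^ 2) volume a b := by
  simp_rw [div_eq_mul_inv]
  refine hg.intervalIntegrable.mul_continuousOn (ContinuousOn.inv₀ (by fun_prop) ?_)
  exact fun t ht => pow_ne_zero 2 ((lt_min ha hb).trans_le ht.1).ne'

theorem monotone_ite_lt (m : ℝ) : Monotone fun t : ℝ => if m < t then (1 : ℝ) else 0 :=
  fun x y hxy => by
    dsimp only
    split_ifs with hx hy <;> first | exact absurd (hx.trans_le hxy) hy | norm_num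

theorem one_div_eq_one_div_add_integral {a m M : ℝ} (ha : 0 < a) (ham : a ≤ m) (hmM : m ≤ M) :
    1 / m = 1 / M + ∫ t in a..M, (if m < t then (1 : ℝ) else 0) / t ^ 2 := by
  have hm : 0 < m := ha.trans_le ham
  have : ∫ t in a..M, (if m < t then (1 : ℝ) else 0) / t ^ 2 = ∫ t in m..M, 1 / t ^ 2 := by
    rw [integral_of_le (ham.trans hmM), integral_of_le hmM]
    calc ∫ t in Ioc a M, (if m < t then (1 : ℝ) else 0) / t ^ 2
        = ∫ t in Ioc a M, (Ioi m).indicator (fun t => 1 / t ^ 2) t := by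
          congr 1 with t
          by_cases h : m < t <;> simp [h]
      _ = ∫ t in Ioc m M, 1 / t ^ 2 := by
          rw [setIntegral_indicator measurableSet_Ioi, Ioc_inter_Ioi, max_eq_right ham]
  rw [this, integral_one_div_sq hm (hm.trans_le hmM)]
  ring

theorem sum_one_div_eq_card_div_add_integral {ι : Type*} (s : Finset ι) (m : ι → ℝ) {a M : ℝ}
    (ha : 0 < a) (haM : a ≤ M) (hm : ∀ i ∈ s, m i ∈ Icc a M) :
    ∑ i ∈ s, 1 / m i
      = #s / M + ∫ t in a..M, (∑ i ∈ s, if m i < t then (1 : ℝ) else 0) / t ^ 2 := by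
  have hint : ∀ i ∈ s, IntervalIntegrable (fun t => (if m i < t then (1 : ℝ) else 0) / t ^ 2)
      volume a M := fun i _ =>
    intervalIntegrable_div_sq_of_monotone (monotone_ite_lt (m i)) ha (ha.trans_le haM)
  rw [Finset.sum_congr rfl fun i hi => one_div_eq_one_div_add_integral ha (hm i hi).1 (hm i hi).2,
    Finset.sum_add_distrib, ← integral_finsetSum hint]
  simp only [Finset.sum_const, nsmul_eq_mul, mul_one_div, Finset.sum_div]

theorem sum_one_div_le_of_sum_ite_le {ι : Type*} (s : Finset ι) (m : ι → ℝ) {a M C : ℝ}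
    (ha : 0 < a) (haM : a ≤ M) (hm : ∀ i ∈ s, m i ∈ Icc a M)
    (hcount : ∀ t ∈ Icc a M, ∑ i ∈ s, (if m i ≤ t then (1 : ℝ) else 0) ≤ C * t * √t) :
    ∑ i ∈ s, 1 / m i ≤ #s / M + 2 * C * (√M - √a) := by
  have hM : 0 < M := ha.trans_le haM
  rw [sum_one_div_eq_card_div_add_integral s m ha haM hm, ← integral_div_sqrt ha hM C]
  refine add_le_add_right (integral_mono_on haM ?_ (intervalIntegrable_div_sqrt ha hM C)
    fun t ht => ?_) _
  · refine intervalIntegrable_div_sq_of_monotone ?_ ha hM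
    exact fun x y hxy => Finset.sum_le_sum fun i _ => monotone_ite_lt (m i) hxy
  have htpos : 0 < t := ha.trans_le ht.1
  calc (∑ i ∈ s, if m i < t then (1 : ℝ) else 0) / t ^ 2
      ≤ (∑ i ∈ s, if m i ≤ t then (1 : ℝ) else 0) / t ^ 2 := by
        gcongr with i
        split_ifs with hlt hle <;> first | exact absurd hlt.le hle | norm_num
    _ ≤ C * t * √t / t ^ 2 := by gcongr; exact hcount t ht
    _ = C / √t := by
        have hs : √t ≠ 0 := (sqrt_pos.mpr htpos).ne'
        field_simp
        rw [sq_sqrt htpos.le]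

/-- `Σ_{k₁,k₂,k₃=1}^{K} 1/(k₁² + k₂² + k₃²) ≤ (√3 π/2) K − π/2 + 1/3`. -/
theorem sum_inv_norm_sq_3d (K : ℕ) (hK : 1 ≤ K) :
    ∑ k₁ ∈ Finset.Icc 1 K, ∑ k₂ ∈ Finset.Icc 1 K, ∑ k₃ ∈ Finset.Icc 1 K,
        (1 : ℝ) / ((k₁ : ℝ) ^ 2 + (k₂ : ℝ) ^ 2 + (k₃ : ℝ) ^ 2)
      ≤ Real.sqrt 3 * π / 2 * K - π / 2 + 1 / 3 := by
  set A := Finset.Icc 1 K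
  let m : ℕ × ℕ × ℕ → ℝ := fun k => (k.1 : ℝ) ^ 2 + (k.2.1 : ℝ) ^ 2 + (k.2.2 : ℝ) ^ 2
  have hK1 : (1 : ℝ) ≤ K := by exact_mod_cast hK
  have hm : ∀ k ∈ A ×ˢ A ×ˢ A, m k ∈ Icc 3 (3 * (K : ℝ) ^ 2) := by
    simp only [Finset.mem_product, A, Finset.mem_Icc, and_imp]
    intro k h₁ h₁' h₂ h₂' h₃ h₃'
    have : ∀ j : ℕ, 1 ≤ j → j ≤ K → (1 : ℝ) ≤ (j : ℝ) ^ 2 ∧ (j : ℝ) ^ 2 ≤ (K : ℝ) ^ 2 :=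
      fun j hj hjK => ⟨one_le_pow₀ (by exact_mod_cast hj), by gcongr⟩
    constructor <;> linarith [this _ h₁ h₁', this _ h₂ h₂', this _ h₃ h₃']
  have hbound := sum_one_div_le_of_sum_ite_le (A ×ˢ A ×ˢ A) m (by norm_num) (by nlinarith) hm
    fun t ht => by
      simpa only [Finset.sum_product] using sum_Icc_ite_sq_add_sq_add_sq_le K (by linarith [ht.1])
  simp only [Finset.sum_product, Finset.card_product, A, Nat.card_Icc, m] at hbound
  have h3 : 1 ≤ √3 := one_le_sqrt.mpr (by norm_num)
  have h3π : 2 ≤ √3 * π := by nlinarith [pi_gt_three]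
  calc _ ≤ _ := hbound
    _ = K / 3 + √3 * π / 3 * (K - 1) := by
      rw [sqrt_mul (by norm_num), sqrt_sq (by positivity)]
      push_cast
      field_simp
      ring
    _ ≤ √3 * π / 2 * K - π / 2 + 1 / 3 := by
      linarith [mul_nonneg (sub_nonneg.mpr hK1) (sub_nonneg.mpr h3π),
        mul_nonneg (sub_nonneg.mpr h3) pi_pos.le]
end

section
/- Let d = 1, fix λ > 0, and let S : ℝ → ℝ be continuous on [−4λ, 0] with S(0) = 1, |S(z)| < 1 for all z ∈ [−4λ, 0), and S differentiable at 0 with S′(0) = 1. Then there exists a constant C > 0 (depending only on S and λ) such that for every integer K ≥ 2, with Δt = λ/K² and s_k = −4ΔtK² sin²(π k/(2K)), one has Σ_{k=1}^{K−1} 1/(1 − |S(s_k)|) ≤ C·Δt^{−1}. -/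
/-!
Since `S(0) = 1` and `S'(0) = 1`, we have `1 - |S z| ≥ -z/2` near `0⁻`, and by compactness
`1 - |S z| ≥ c · (-z)` on all of `[-4λ, 0)` for some `c > 0`. As `s_k = -4λ sin²(πk/(2K))` and
Jordan's inequality gives `sin(πk/(2K)) ≥ k/K`, the `k`-th term is at most `K² / (4cλk²)`, and
`Σ 1/k² ≤ 2` gives the bound `K²/(2cλ) = Δt⁻¹/(2c)`.
-/

open Real Filter Topology Set

theorem eventually_mul_neg_le_one_sub_abs {S : ℝ → ℝ} {d : ℝ} (hd : 0 < d) (hS0 : S 0 = 1)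
    (hS : HasDerivAt S d 0) : ∀ᶠ z in 𝓝[<] 0, d / 2 * -z ≤ 1 - |S z| := by
  have hlin := (hasDerivAt_iff_isLittleO.mp hS).def (half_pos hd)
  have hnear : ∀ᶠ z in 𝓝 (0 : ℝ), -(1 / d) < z := lt_mem_nhds (by simpa using hd)
  filter_upwards [nhdsWithin_le_nhds hlin, nhdsWithin_le_nhds hnear, self_mem_nhdsWithin]
    with z hlin hnear (hz : z < 0)
  simp only [hS0, sub_zero, smul_eq_mul, norm_eq_abs, abs_of_neg hz] at hlin
  have hdz : -1 ≤ z * d := by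
    have h := mul_lt_mul_of_pos_right hnear hd
    rw [neg_mul, one_div_mul_cancel hd.ne'] at h
    exact h.le
  have := abs_sub_abs_le_abs_sub (S z) (1 + z * d)
  rw [abs_of_nonneg (by linarith : 0 ≤ 1 + z * d),
    show S z - (1 + z * d) = S z - 1 - z * d by ring] at this
  nlinarith

theorem exists_pos_mul_neg_le_of_eventually {g : ℝ → ℝ} {a ε : ℝ} (hε : 0 < ε)
    (hg : ContinuousOn g (Icc a 0)) (hpos : ∀ z ∈ Ico a 0, 0 < g z)
    (hloc : ∀ᶠ z in 𝓝[<] 0, ε * -z ≤ g z) :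
    ∃ c > 0, ∀ z ∈ Ico a 0, c * -z ≤ g z := by
  obtain ⟨t, ht, hIoo⟩ := mem_nhdsLT_iff_exists_Ioo_subset.1 hloc
  -- on the compact `[a, t]`, away from `0`, the ratio `g z / -z` is bounded below
  have hratio : ContinuousOn (fun z => g z / -z) (Icc a t) :=
    (hg.mono (Icc_subset_Icc_right ht.le)).div continuousOn_neg
      fun z hz => neg_ne_zero.2 (hz.2.trans_lt ht).ne
  obtain ⟨m, hm, hmle⟩ := isCompact_Icc.exists_forall_le' hratio (a := 0)
    fun z hz => div_pos (hpos z ⟨hz.1, hz.2.trans_lt ht⟩) (neg_pos.2 (hz.2.trans_lt ht))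
  refine ⟨min ε m, lt_min hε hm, fun z hz => ?_⟩
  have hz0 : 0 < -z := neg_pos.2 hz.2
  rcases le_or_gt z t with hzt | hzt
  · calc min ε m * -z ≤ m * -z := by gcongr; exact min_le_right _ _
      _ ≤ g z / -z * -z := by gcongr; exact hmle z ⟨hz.1, hzt⟩
      _ = g z := div_mul_cancel₀ _ hz0.ne'
  · calc min ε m * -z ≤ ε * -z := by gcongr; exact min_le_left _ _
      _ ≤ g z := hIoo ⟨hzt, hz.2⟩

theorem le_sin_pi_div_two_mul {x : ℝ} (h0 : 0 ≤ x) (h1 : x ≤ 1) : x ≤ sin (π / 2 * x) := by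
  have h := mul_le_sin (x := π / 2 * x) (by positivity) (by nlinarith [pi_pos])
  rwa [← mul_assoc, div_mul_div_cancel₀ pi_ne_zero, div_self two_ne_zero, one_mul] at h

theorem one_div_one_sub_abs_le {S : ℝ → ℝ} {lam c x y : ℝ} (hlam : 0 < lam) (hc : 0 < c)
    (hS : ∀ z ∈ Ico (-(4 * lam)) 0, c * -z ≤ 1 - |S z|) (hy : 0 < y) (hyx : y ≤ x)
    (hx : x ≤ 1) : 1 / (1 - |S (-(4 * lam * x ^ 2))|) ≤ (4 * c * lam * y ^ 2)⁻¹ := by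
  have hx2 : x ^ 2 ≤ 1 := pow_le_one₀ (hy.le.trans hyx) hx
  have hyx2 : y ^ 2 ≤ x ^ 2 := pow_le_pow_left₀ hy.le hyx 2
  have hmem : -(4 * lam * x ^ 2) ∈ Ico (-(4 * lam)) 0 :=
    ⟨by nlinarith, by nlinarith [pow_pos hy 2]⟩
  rw [one_div]
  refine inv_anti₀ (by positivity) ?_
  calc 4 * c * lam * y ^ 2 ≤ c * -(-(4 * lam * x ^ 2)) := by
        rw [neg_neg]; nlinarith [mul_pos hc hlam]
    _ ≤ 1 - |S (-(4 * lam * x ^ 2))| := hS _ hmem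

/-- 1D bound: `Σ_{k=1}^{K−1} 1/(1 − |S(s_k)|) ≤ C Δt⁻¹`
where `Δt = λ/K²` and `s_k = −4ΔtK² sin²(πk/(2K))`, for any Runge-Kutta
stability function `S` that is continuous on `[−4λ, 0]`, satisfies `S(0) = 1`,
`|S(z)| < 1` on `[−4λ, 0)`, and `S′(0) = 1`. -/
theorem series_bound_1d (lam : ℝ) (hlam : 0 < lam) (S : ℝ → ℝ)
    (hcont : ContinuousOn S (Set.Icc (-(4 * lam)) 0))
    (hS0 : S 0 = 1)
    (hSlt : ∀ z ∈ Set.Ico (-(4 * lam)) 0, |S z| < 1)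
    (hderiv : HasDerivAt S 1 0) :
    ∃ C > 0, ∀ K : ℕ, 2 ≤ K →
      ∑ k ∈ Finset.Icc 1 (K - 1),
          1 / (1 - |S (-(4 * (lam / (K : ℝ) ^ 2) * (K : ℝ) ^ 2
            * Real.sin (π * (k : ℝ) / (2 * K)) ^ 2))|)
        ≤ C * (lam / (K : ℝ) ^ 2)⁻¹ := by
  obtain ⟨c, hc, hS⟩ : ∃ c > 0, ∀ z ∈ Ico (-(4 * lam)) 0, c * -z ≤ 1 - |S z| :=
    exists_pos_mul_neg_le_of_eventually (ε := 1 / 2) one_half_pos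
      (continuousOn_const.sub hcont.abs) (fun z hz => sub_pos.2 (hSlt z hz))
      (by simpa using eventually_mul_neg_le_one_sub_abs one_pos hS0 hderiv)
  refine ⟨1 / (2 * c), by positivity, fun K hK => ?_⟩
  have hK : (0 : ℝ) < K := by positivity
  have hterm : ∀ k ∈ Finset.Ioo 0 K,
      1 / (1 - |S (-(4 * (lam / (K : ℝ) ^ 2) * (K : ℝ) ^ 2 * sin (π * k / (2 * K)) ^ 2))|)
        ≤ K ^ 2 / (4 * c * lam) * ((k : ℝ) ^ 2)⁻¹ := by
    intro k hk
    obtain ⟨hk0, hkK⟩ := Finset.mem_Ioo.1 hk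
    have hkK' : (k : ℝ) / K ≤ 1 := div_le_one_of_le₀ (by exact_mod_cast hkK.le) hK.le
    have hsin := le_sin_pi_div_two_mul (by positivity) hkK'
    rw [show π * k / (2 * K) = π / 2 * (k / K) by ring,
      show 4 * (lam / (K : ℝ) ^ 2) * K ^ 2 = 4 * lam by field_simp]
    refine (one_div_one_sub_abs_le hlam hc hS (by positivity) hsin (sin_le_one _)).trans_eq ?_
    field_simp
  have hIcc : Finset.Icc 1 (K - 1) = Finset.Ioo 0 K := by
    ext; simp only [Finset.mem_Icc, Finset.mem_Ioo]; omega
  calc _ ≤ ∑ k ∈ Finset.Ioo 0 K, K ^ 2 / (4 * c * lam) * ((k : ℝ) ^ 2)⁻¹ :=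
        hIcc ▸ Finset.sum_le_sum hterm
    _ = K ^ 2 / (4 * c * lam) * ∑ k ∈ Finset.Ioo 0 K, ((k : ℝ) ^ 2)⁻¹ := by rw [Finset.mul_sum]
    _ ≤ K ^ 2 / (4 * c * lam) * 2 := by
        gcongr; simpa using sum_Ioo_inv_sq_le (α := ℝ) 0 K
    _ = 1 / (2 * c) * (lam / (K : ℝ) ^ 2)⁻¹ := by field_simp; ring
end

section
/- Let d = 3, fix λ > 0, and let S : ℝ → ℝ be continuous on [−12λ, 0] with S(0) = 1, |S(z)| < 1 for all z ∈ [−12λ, 0), and S differentiable at 0 with S′(0) = 1. Then there exists a constant C > 0 (depending only on S and λ) such that for every integer K ≥ 2, with Δt = λ/K² and s_k = −4ΔtK² Σ_{j=1}^3 sin²(π k_j/(2K)), one has Σ_{k ∈ {1,…,K−1}³} 1/(1 − |S(s_k)|) ≤ C·Δt^{−3/2}. -/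
/-!
The hypotheses on `S` give a linear stability margin `c * (-z) ≤ 1 - |S z|` on `[-12λ, 0)`:
near `0` because `S z = 1 + z + o(z)`, away from `0` by compactness. Since `sin x ≥ 2x/π` on
`[0, π/2]`, we have `s_k ≤ -4λ|k|²/K²`, so each term is at most `K²/(4cλ|k|²)`. By AM-GM,
`|k|² ≥ 3 (k₁k₂k₃)^(2/3)`, so the lattice sum of `1/|k|²` splits into a cube
`(∑_{j<K} j^(-2/3))³ / 3 ≤ 9K`, and the total is `O(K³) = O(Δt^(-3/2))`.
-/

open Real Filter Topology Set

theorem eventually_half_mul_neg_le_one_sub_abs {S : ℝ → ℝ} {a : ℝ} (ha : 0 < a) (hS0 : S 0 = 1)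
    (hderiv : HasDerivAt S a 0) : ∀ᶠ z in 𝓝[<] 0, a / 2 * -z ≤ 1 - |S z| := by
  have hlin := (hasDerivAt_iff_isLittleO.mp hderiv).def (half_pos ha)
  have hnear : ∀ᶠ z in 𝓝 (0 : ℝ), -1 / a < z :=
    eventually_gt_nhds (div_neg_of_neg_of_pos neg_one_lt_zero ha)
  filter_upwards [nhdsWithin_le_nhds hlin, nhdsWithin_le_nhds hnear, self_mem_nhdsWithin]
    with z hz hza (hz0 : z < 0)
  simp only [hS0, sub_zero, smul_eq_mul, norm_eq_abs, abs_of_neg hz0, sub_sub] at hz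
  have h1 : 0 ≤ 1 + z * a := by linarith [(div_lt_iff₀ ha).mp hza]
  have := abs_sub_abs_le_abs_sub (S z) (1 + z * a)
  rw [abs_of_nonneg h1] at this
  linarith

theorem exists_pos_mul_neg_le_one_sub_abs {S : ℝ → ℝ} {R a : ℝ} (hR : 0 < R)
    (hcont : ContinuousOn S (Icc (-R) 0)) (hS0 : S 0 = 1)
    (hSlt : ∀ z ∈ Ico (-R) 0, |S z| < 1) (ha : 0 < a) (hderiv : HasDerivAt S a 0) :
    ∃ c > 0, ∀ z ∈ Ico (-R) 0, c * -z ≤ 1 - |S z| := by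
  obtain ⟨l, hl0, hl⟩ :=
    mem_nhdsLT_iff_exists_Ioo_subset.mp (eventually_half_mul_neg_le_one_sub_abs ha hS0 hderiv)
  set b := max l (-R)
  have hb : b < 0 := max_lt hl0 (by linarith)
  obtain ⟨z₀, hz₀, hmin⟩ := isCompact_Icc.exists_isMinOn (nonempty_Icc.mpr (le_max_right l (-R)))
    ((continuousOn_const.sub hcont.abs).mono (Icc_subset_Icc le_rfl hb.le))
  have hm : 0 < 1 - |S z₀| := sub_pos.mpr (hSlt z₀ ⟨hz₀.1, hz₀.2.trans_lt hb⟩)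
  refine ⟨min (a / 2) ((1 - |S z₀|) / R), by positivity, fun z hz => ?_⟩
  rcases le_or_gt z b with hzb | hzb
  · calc min (a / 2) ((1 - |S z₀|) / R) * -z ≤ (1 - |S z₀|) / R * R :=
          mul_le_mul (min_le_right _ _) (by linarith [hz.1]) (by linarith [hz.2]) (by positivity)
      _ = 1 - |S z₀| := div_mul_cancel₀ _ hR.ne'
      _ ≤ 1 - |S z| := hmin ⟨hz.1, hzb⟩
  · calc min (a / 2) ((1 - |S z₀|) / R) * -z ≤ a / 2 * -z :=
          mul_le_mul_of_nonneg_right (min_le_left _ _) (by linarith [hz.2])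
      _ ≤ 1 - |S z| := hl ⟨(le_max_left _ _).trans_lt hzb, hz.2⟩

theorem div_sq_le_sin_sq {k K : ℝ} (hk : 0 ≤ k) (hkK : k ≤ K) (hK : 0 < K) :
    (k / K) ^ 2 ≤ sin (π * k / (2 * K)) ^ 2 := by
  have hx : π * k / (2 * K) = π / 2 * (k / K) := by ring
  have h := mul_le_sin (x := π * k / (2 * K)) (by positivity)
    (by rw [hx]; exact mul_le_of_le_one_right (by positivity) ((div_le_one hK).mpr hkK))
  rw [hx, ← mul_assoc, div_mul_div_cancel₀ pi_pos.ne', div_self two_ne_zero, one_mul] at h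
  rw [hx]
  exact pow_le_pow_left₀ (by positivity) h 2

theorem mul_rpow_sub_one_le_rpow_sub_rpow {p x : ℝ} (hp0 : 0 ≤ p) (hp1 : p ≤ 1) (hx : 1 ≤ x) :
    p * x ^ (p - 1) ≤ x ^ p - (x - 1) ^ p := by
  have hx0 : 0 < x := by linarith
  have hs : -1 ≤ -x⁻¹ := neg_le_neg (inv_le_one_of_one_le₀ hx)
  have hbern := rpow_one_add_le_one_add_mul_self hs hp0 hp1
  have hsplit : (x - 1) ^ p = x ^ p * (1 + -x⁻¹) ^ p := by
    rw [← mul_rpow hx0.le (by linarith)]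
    congr 1; field_simp; ring
  rw [hsplit, rpow_sub_one hx0.ne']
  have := mul_le_mul_of_nonneg_left hbern (rpow_nonneg hx0.le p)
  have e : x ^ p * (1 + p * -x⁻¹) = x ^ p - p * (x ^ p / x) := by field_simp; ring
  linarith

theorem sum_Icc_rpow_sub_one_le {p : ℝ} (hp0 : 0 < p) (hp1 : p ≤ 1) (n : ℕ) :
    ∑ k ∈ Finset.Icc 1 n, (k : ℝ) ^ (p - 1) ≤ (n : ℝ) ^ p / p := by
  induction n with
  | zero => simp [zero_rpow hp0.ne']
  | succ n ih =>
    rw [Finset.sum_Icc_succ_top (by omega), le_div_iff₀ hp0]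
    have hstep := mul_rpow_sub_one_le_rpow_sub_rpow hp0.le hp1
      (by simp : (1 : ℝ) ≤ ((n + 1 : ℕ) : ℝ))
    rw [le_div_iff₀ hp0] at ih
    push_cast at hstep ⊢
    simp only [add_sub_cancel_right] at hstep
    linarith

theorem three_mul_rpow_le_sum_sq {x y z : ℝ} (hx : 0 ≤ x) (hy : 0 ≤ y) (hz : 0 ≤ z) :
    3 * (x * y * z) ^ ((2 : ℝ) / 3) ≤ x ^ 2 + y ^ 2 + z ^ 2 := by
  have h := geom_mean_le_arith_mean3_weighted (w₁ := 1/3) (w₂ := 1/3) (w₃ := 1/3)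
    (by norm_num) (by norm_num) (by norm_num) (sq_nonneg x) (sq_nonneg y) (sq_nonneg z)
    (by norm_num)
  rw [← mul_rpow (by positivity) (by positivity), ← mul_rpow (by positivity) (by positivity),
    ← mul_pow, ← mul_pow, ← rpow_natCast, ← rpow_mul (by positivity)] at h
  norm_num at h
  linarith

theorem sum_Icc_cube_one_div_sum_sq_le (n : ℕ) :
    ∑ a ∈ Finset.Icc 1 n, ∑ b ∈ Finset.Icc 1 n, ∑ c ∈ Finset.Icc 1 n,
      1 / ((a : ℝ) ^ 2 + (b : ℝ) ^ 2 + (c : ℝ) ^ 2) ≤ 9 * (n : ℝ) := by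
  set f : ℕ → ℝ := fun k => (k : ℝ) ^ ((1 : ℝ) / 3 - 1)
  have hterm : ∀ a ∈ Finset.Icc 1 n, ∀ b ∈ Finset.Icc 1 n, ∀ c ∈ Finset.Icc 1 n,
      1 / ((a : ℝ) ^ 2 + (b : ℝ) ^ 2 + (c : ℝ) ^ 2) ≤ 1 / 3 * (f a * f b * f c) := by
    intro a ha b hb c hc
    have ha : (0 : ℝ) < a := by exact_mod_cast (Finset.mem_Icc.mp ha).1
    have hb : (0 : ℝ) < b := by exact_mod_cast (Finset.mem_Icc.mp hb).1
    have hc : (0 : ℝ) < c := by exact_mod_cast (Finset.mem_Icc.mp hc).1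
    calc 1 / ((a : ℝ) ^ 2 + (b : ℝ) ^ 2 + (c : ℝ) ^ 2)
        ≤ 1 / (3 * (a * b * c : ℝ) ^ ((2 : ℝ) / 3)) :=
          one_div_le_one_div_of_le (by positivity) (three_mul_rpow_le_sum_sq ha.le hb.le hc.le)
      _ = 1 / 3 * (f a * f b * f c) := by
          simp only [f, ← mul_rpow ha.le hb.le, ← mul_rpow (mul_pos ha hb).le hc.le]
          rw [show (1 : ℝ) / 3 - 1 = -(2 / 3) by norm_num, rpow_neg (by positivity)]
          field_simp
  have hsum := sum_Icc_rpow_sub_one_le (p := 1 / 3) (by norm_num) (by norm_num) n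
  have hf : 0 ≤ ∑ k ∈ Finset.Icc 1 n, f k := Finset.sum_nonneg fun k _ => by positivity
  have hcube : ((n : ℝ) ^ ((1 : ℝ) / 3)) ^ 3 = n := by
    rw [← rpow_natCast, ← rpow_mul (by positivity)]; norm_num
  calc _ ≤ ∑ a ∈ Finset.Icc 1 n, ∑ b ∈ Finset.Icc 1 n, ∑ c ∈ Finset.Icc 1 n,
        1 / 3 * (f a * f b * f c) := by
        gcongr with a ha b hb c hc; exact hterm a ha b hb c hc
    _ = 1 / 3 * (∑ k ∈ Finset.Icc 1 n, f k) ^ 3 := by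
        simp only [pow_three, Finset.mul_sum, Finset.sum_mul]
        refine Finset.sum_congr rfl fun _ _ => Finset.sum_congr rfl fun _ _ =>
          Finset.sum_congr rfl fun _ _ => by ring
    _ ≤ 1 / 3 * ((n : ℝ) ^ ((1 : ℝ) / 3) / (1 / 3)) ^ 3 := by gcongr
    _ = 9 * n := by rw [div_pow, hcube]; ring

theorem one_div_one_sub_abs_le_of_margin {S : ℝ → ℝ} {R c q t : ℝ} (hc0 : 0 < c)
    (hc : ∀ z ∈ Ico (-R) 0, c * -z ≤ 1 - |S z|) (hq : 0 < q) (hqt : q ≤ t) (htR : t ≤ R) :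
    1 / (1 - |S (-t)|) ≤ 1 / (c * q) := by
  have h := hc (-t) ⟨by linarith, by linarith⟩
  rw [neg_neg] at h
  exact one_div_le_one_div_of_le (by positivity) (h.trans' (by gcongr))

theorem one_div_one_sub_abs_le_mul_one_div_sum_sq {S : ℝ → ℝ} {lam c : ℝ} (hlam : 0 < lam)
    (hc0 : 0 < c) (hc : ∀ z ∈ Ico (-(12 * lam)) 0, c * -z ≤ 1 - |S z|) {K k₁ k₂ k₃ : ℕ}
    (h₁ : k₁ ∈ Finset.Icc 1 (K - 1)) (h₂ : k₂ ∈ Finset.Icc 1 (K - 1))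
    (h₃ : k₃ ∈ Finset.Icc 1 (K - 1)) :
    1 / (1 - |S (-(4 * (lam / (K : ℝ) ^ 2) * (K : ℝ) ^ 2
      * (sin (π * (k₁ : ℝ) / (2 * K)) ^ 2 + sin (π * (k₂ : ℝ) / (2 * K)) ^ 2
        + sin (π * (k₃ : ℝ) / (2 * K)) ^ 2)))|)
      ≤ (K : ℝ) ^ 2 / (4 * c * lam) * (1 / ((k₁ : ℝ) ^ 2 + (k₂ : ℝ) ^ 2 + (k₃ : ℝ) ^ 2)) := by
  have hK : (0 : ℝ) < K := by
    have := Finset.mem_Icc.mp h₁; exact_mod_cast (by omega : 0 < K)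
  have hsin : ∀ k ∈ Finset.Icc 1 (K - 1), ((k : ℝ) / K) ^ 2 ≤ sin (π * k / (2 * K)) ^ 2 :=
    fun k hk => div_sq_le_sin_sq k.cast_nonneg
      (by have := Finset.mem_Icc.mp hk; exact_mod_cast (by omega : k ≤ K)) hK
  have hk : ∀ k ∈ Finset.Icc 1 (K - 1), (0 : ℝ) < k :=
    fun k hk => by have := Finset.mem_Icc.mp hk; exact_mod_cast (by omega : 0 < k)
  have hk₁ := hk k₁ h₁; have hk₂ := hk k₂ h₂; have hk₃ := hk k₃ h₃
  rw [show 4 * (lam / (K : ℝ) ^ 2) * (K : ℝ) ^ 2 = 4 * lam by field_simp]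
  calc _ ≤ 1 / (c * (4 * lam * ((k₁ / K) ^ 2 + (k₂ / K) ^ 2 + (k₃ / K) ^ 2))) := by
        refine one_div_one_sub_abs_le_of_margin hc0 hc (by positivity) ?_ ?_
        · exact mul_le_mul_of_nonneg_left
            (add_le_add_three (hsin _ h₁) (hsin _ h₂) (hsin _ h₃)) (by positivity)
        · nlinarith [sin_sq_le_one (π * (k₁ : ℝ) / (2 * K)),
            sin_sq_le_one (π * (k₂ : ℝ) / (2 * K)), sin_sq_le_one (π * (k₃ : ℝ) / (2 * K))]
    _ = _ := by field_simp

theorem div_sq_rpow_neg_three_halves {x y : ℝ} (hx : 0 < x) (hy : 0 < y) :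
    (x / y ^ 2) ^ (-(3 : ℝ) / 2) = y ^ 3 / (x * x ^ ((1 : ℝ) / 2)) := by
  rw [show -(3 : ℝ) / 2 = -(1 + 1 / 2) by norm_num, rpow_neg (by positivity),
    div_rpow hx.le (by positivity), ← rpow_natCast y 2, ← rpow_mul hy.le, rpow_add hx, rpow_one]
  norm_num

/-- 3D bound: `Σ_{k∈{1,…,K−1}³} 1/(1 − |S(s_k)|) ≤ C Δt^(−3/2)`
where `Δt = λ/K²` and `s_k = −4ΔtK² Σ_{j=1}^3 sin²(πkⱼ/(2K))`. -/
theorem series_bound_3d (lam : ℝ) (hlam : 0 < lam) (S : ℝ → ℝ)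
    (hcont : ContinuousOn S (Set.Icc (-(12 * lam)) 0))
    (hS0 : S 0 = 1)
    (hSlt : ∀ z ∈ Set.Ico (-(12 * lam)) 0, |S z| < 1)
    (hderiv : HasDerivAt S 1 0) :
    ∃ C > 0, ∀ K : ℕ, 2 ≤ K →
      ∑ k₁ ∈ Finset.Icc 1 (K - 1), ∑ k₂ ∈ Finset.Icc 1 (K - 1),
        ∑ k₃ ∈ Finset.Icc 1 (K - 1),
          1 / (1 - |S (-(4 * (lam / (K : ℝ) ^ 2) * (K : ℝ) ^ 2
            * (Real.sin (π * (k₁ : ℝ) / (2 * K)) ^ 2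
              + Real.sin (π * (k₂ : ℝ) / (2 * K)) ^ 2
              + Real.sin (π * (k₃ : ℝ) / (2 * K)) ^ 2)))|)
        ≤ C * (lam / (K : ℝ) ^ 2) ^ (-(3 : ℝ) / 2) := by
  obtain ⟨c, hc0, hc⟩ :=
    exists_pos_mul_neg_le_one_sub_abs (by positivity) hcont hS0 hSlt one_pos hderiv
  refine ⟨9 * lam ^ ((1 : ℝ) / 2) / (4 * c), by positivity, fun K hK => ?_⟩
  have hK0 : (0 : ℝ) < K := by positivity
  calc _ ≤ ∑ k₁ ∈ Finset.Icc 1 (K - 1), ∑ k₂ ∈ Finset.Icc 1 (K - 1), ∑ k₃ ∈ Finset.Icc 1 (K - 1),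
        (K : ℝ) ^ 2 / (4 * c * lam) * (1 / ((k₁ : ℝ) ^ 2 + (k₂ : ℝ) ^ 2 + (k₃ : ℝ) ^ 2)) := by
        gcongr with k₁ h₁ k₂ h₂ k₃ h₃
        exact one_div_one_sub_abs_le_mul_one_div_sum_sq hlam hc0 hc h₁ h₂ h₃
    _ = (K : ℝ) ^ 2 / (4 * c * lam) * ∑ k₁ ∈ Finset.Icc 1 (K - 1), ∑ k₂ ∈ Finset.Icc 1 (K - 1),
        ∑ k₃ ∈ Finset.Icc 1 (K - 1), 1 / ((k₁ : ℝ) ^ 2 + (k₂ : ℝ) ^ 2 + (k₃ : ℝ) ^ 2) := by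
        simp only [Finset.mul_sum]
    _ ≤ (K : ℝ) ^ 2 / (4 * c * lam) * (9 * K) := by
        gcongr
        exact (sum_Icc_cube_one_div_sum_sq_le (K - 1)).trans (by gcongr; exact Nat.sub_le K 1)
    _ = _ := by rw [div_sq_rpow_neg_three_halves hlam hK0]; field_simp
end

section
/- Let d ∈ {1, 2, 3}, fix λ > 0, and let S : ℝ → ℝ be continuous on [−4dλ, 0] with S(0) = 1, |S(z)| < 1 for all z ∈ [−4dλ, 0), and S differentiable at 0 with S′(0) = 1. Then there exists a constant C̄ > 0 (depending only on S, d and λ) such that for every integer K ≥ 2, with Δt = λ/K² and s_k = −4ΔtK² Σ_{j=1}^d sin²(π k_j/(2K)), one has Σ_{k ∈ {1,…,K−1}^d} 1/(1 − |S(s_k)|)² ≤ C̄²·Δt^{−2}. -/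
/-!
Near `0` the consistency condition `S z = 1 + z + o(z)` gives `1 - |S z| ≥ |z| / 2`, and on the
rest of `[-4dλ, 0]` compactness keeps `1 - |S|` away from `0`; hence `1 - |S z| ≥ c |z|` there.
Jordan's inequality `sin x ≥ 2x/π` and AM-GM bound `|s_k| = 4λ ∑ sin² (π k_j / 2K)` below by
`4λd (∏ k_j)^(2/d) / K²`, so the `k`-th term is at most `K⁴ / (4cλd)² · ∏ k_j^(-4/d)`. Summed over
`k` this factors into the `d`-th power of a partial sum of `∑ n^(-4/d)`, which converges as `d < 4`.
-/

open Real

/-- The eigenvalue arguments `s_k = −Δt·λ_k^h` of the stability function, with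
`Δt = λ/K²` and multi-index `k` with components `(k j) + 1 ∈ {1,…,K−1}`. -/
noncomputable def sVal (K d : ℕ) (lam : ℝ) (k : Fin d → Fin (K - 1)) : ℝ :=
  -(4 * (lam / (K : ℝ) ^ 2) * (K : ℝ) ^ 2
    * ∑ j, Real.sin (π * (((k j : ℕ) : ℝ) + 1) / (2 * K)) ^ 2)

open Set

section StabilityFunction

variable {S : ℝ → ℝ} {a M : ℝ}

lemma exists_half_mul_abs_le_one_sub_abs (hS0 : S 0 = 1) (ha : 0 < a)
    (hderiv : HasDerivAt S a 0) :
    ∃ δ > 0, ∀ z ∈ Icc (-δ) 0, a / 2 * |z| ≤ 1 - |S z| := by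
  obtain ⟨ε, hε, hsmall⟩ := Metric.eventually_nhds_iff.mp
    ((hasDerivAt_iff_isLittleO.mp hderiv).def (half_pos ha))
  refine ⟨min (ε / 2) a⁻¹, by positivity, fun z ⟨hz₁, hz₂⟩ => ?_⟩
  have hzε : dist z 0 < ε := by
    rw [Real.dist_eq, sub_zero, abs_of_nonpos hz₂]
    linarith [min_le_left (ε / 2) a⁻¹]
  have haz : -1 ≤ a * z := by
    have := mul_le_mul_of_nonneg_left (min_le_right (ε / 2) a⁻¹) ha.le
    rw [mul_inv_cancel₀ ha.ne'] at this
    nlinarith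
  have hTaylor := abs_le.mp (hsmall hzε)
  simp only [hS0, sub_zero, smul_eq_mul, Real.norm_eq_abs, abs_of_nonpos hz₂] at hTaylor ⊢
  have : |S z| ≤ 1 + a * z / 2 := abs_le.mpr ⟨by nlinarith, by nlinarith⟩
  linarith

lemma exists_pos_mul_abs_le_one_sub_abs (hM : 0 < M)
    (hcont : ContinuousOn S (Icc (-M) 0)) (hS0 : S 0 = 1)
    (hSlt : ∀ z ∈ Ico (-M) 0, |S z| < 1) (ha : 0 < a) (hderiv : HasDerivAt S a 0) :
    ∃ c > 0, ∀ z ∈ Icc (-M) 0, c * |z| ≤ 1 - |S z| := by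
  obtain ⟨δ, hδ, hnear⟩ := exists_half_mul_abs_le_one_sub_abs hS0 ha hderiv
  set δ' := min δ M
  have hδ' : 0 < δ' := lt_min hδ hM
  obtain ⟨z₀, hz₀, hmin⟩ := isCompact_Icc.exists_isMinOn
    (Set.nonempty_Icc.mpr (neg_le_neg (min_le_right δ M)))
    (continuousOn_const.sub (hcont.mono (Icc_subset_Icc_right (by linarith))).abs)
  have hε : 0 < 1 - |S z₀| := sub_pos.mpr (hSlt z₀ ⟨hz₀.1, by linarith [hz₀.2]⟩)
  refine ⟨min (a / 2) ((1 - |S z₀|) / M), by positivity, fun z hz => ?_⟩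
  rcases le_or_gt (-δ') z with hz' | hz'
  · calc min (a / 2) ((1 - |S z₀|) / M) * |z| ≤ a / 2 * |z| := by gcongr; exact min_le_left _ _
      _ ≤ 1 - |S z| := hnear z ⟨(neg_le_neg (min_le_left δ M)).trans hz', hz.2⟩
  · calc min (a / 2) ((1 - |S z₀|) / M) * |z| ≤ (1 - |S z₀|) / M * M := by
          gcongr
          · exact min_le_right _ _
          · exact abs_le.mpr ⟨by linarith [hz.1], by linarith [hz.2]⟩
      _ = 1 - |S z₀| := div_mul_cancel₀ _ hM.ne'
      _ ≤ 1 - |S z| := hmin ⟨hz.1, hz'.le⟩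

end StabilityFunction

lemma card_mul_prod_rpow_le_sum_sq {ι : Type*} [Fintype ι] {x : ι → ℝ} (hx : ∀ i, 0 ≤ x i) :
    (Fintype.card ι : ℝ) * (∏ i, x i) ^ (2 / (Fintype.card ι : ℝ)) ≤ ∑ i, x i ^ 2 := by
  rcases isEmpty_or_nonempty ι with hι | hι
  · simp
  have hn : (0 : ℝ) < Fintype.card ι := by exact_mod_cast Fintype.card_pos
  have hAMGM := Real.geom_mean_le_arith_mean Finset.univ (fun _ => 1) (fun i => x i ^ 2)
    (fun _ _ => zero_le_one) (by simpa using hn) (fun i _ => sq_nonneg (x i))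
  simp only [Real.rpow_one, Finset.sum_const, Finset.card_univ, nsmul_eq_mul, mul_one,
    one_mul] at hAMGM
  rw [Finset.prod_pow, ← Real.rpow_natCast,
    ← Real.rpow_mul (Finset.prod_nonneg fun i _ => hx i)] at hAMGM
  rw [← le_div_iff₀' hn]
  simpa [div_eq_mul_inv] using hAMGM

lemma sq_div_le_sin_sq {x y : ℝ} (hx : 0 ≤ x) (hxy : x ≤ y) :
    (x / y) ^ 2 ≤ sin (π * x / (2 * y)) ^ 2 := by
  have h₀ : 0 ≤ x / y := div_nonneg hx (hx.trans hxy)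
  have h₁ : x / y ≤ 1 := div_le_one_of_le₀ hxy (hx.trans hxy)
  have hJordan := mul_le_sin (x := π / 2 * (x / y)) (by positivity) (by nlinarith [pi_pos])
  rw [show 2 / π * (π / 2 * (x / y)) = x / y by field_simp] at hJordan
  rw [show π * x / (2 * y) = π / 2 * (x / y) by ring]
  exact pow_le_pow_left₀ h₀ hJordan 2

lemma summable_one_div_nat_add_one_rpow {p : ℝ} (hp : 1 < p) :
    Summable fun i : ℕ => 1 / ((i : ℝ) + 1) ^ p := by
  simpa using (summable_nat_add_iff 1).mpr (Real.summable_one_div_nat_rpow.mpr hp)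

lemma sum_prod_one_div_rpow_le_tsum_pow {p : ℝ} (hp : 1 < p) (n d : ℕ) :
    ∑ k : Fin d → Fin n, ∏ j, 1 / (((k j : ℕ) : ℝ) + 1) ^ p
      ≤ (∑' i : ℕ, 1 / ((i : ℝ) + 1) ^ p) ^ d := by
  rw [← Fintype.sum_pow (fun i : Fin n => 1 / (((i : ℕ) : ℝ) + 1) ^ p)]
  gcongr
  rw [Fin.sum_univ_eq_sum_range (fun i => 1 / ((i : ℝ) + 1) ^ p) n]
  exact (summable_one_div_nat_add_one_rpow hp).sum_le_tsum _ fun i _ => by positivity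

section sVal

variable {K d : ℕ} {lam : ℝ} (k : Fin d → Fin (K - 1))

lemma sVal_eq (hK : K ≠ 0) :
    sVal K d lam k = -(4 * lam * ∑ j, sin (π * (((k j : ℕ) : ℝ) + 1) / (2 * K)) ^ 2) := by
  rw [sVal, mul_assoc 4, div_mul_cancel₀ _ (by positivity)]

lemma sVal_mem_Icc (hlam : 0 ≤ lam) (hK : K ≠ 0) :
    sVal K d lam k ∈ Icc (-(4 * d * lam)) 0 := by
  have hsum : ∑ j, sin (π * (((k j : ℕ) : ℝ) + 1) / (2 * K)) ^ 2 ≤ d := by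
    simpa using Finset.sum_le_card_nsmul Finset.univ
      (fun j => sin (π * (((k j : ℕ) : ℝ) + 1) / (2 * K)) ^ 2) 1 fun j _ => sin_sq_le_one _
  rw [sVal_eq k hK]
  constructor
  · nlinarith
  · have := Finset.sum_nonneg fun j (_ : j ∈ Finset.univ) =>
      sq_nonneg (sin (π * (((k j : ℕ) : ℝ) + 1) / (2 * K)))
    nlinarith

lemma card_mul_prod_rpow_div_sq_le_sum_sin_sq :
    d * (∏ j, (((k j : ℕ) : ℝ) + 1)) ^ (2 / d : ℝ) / K ^ 2
      ≤ ∑ j, sin (π * (((k j : ℕ) : ℝ) + 1) / (2 * K)) ^ 2 := by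
  have hAMGM := card_mul_prod_rpow_le_sum_sq fun j => (by positivity : (0 : ℝ) ≤ (k j : ℕ) + 1)
  simp only [Fintype.card_fin] at hAMGM
  calc d * (∏ j, (((k j : ℕ) : ℝ) + 1)) ^ (2 / d : ℝ) / K ^ 2
      ≤ ∑ j, ((((k j : ℕ) : ℝ) + 1) / K) ^ 2 := by
        simp only [div_pow, ← Finset.sum_div]
        gcongr
    _ ≤ _ := Finset.sum_le_sum fun j _ => sq_div_le_sin_sq (by positivity) (by
        have := (k j).isLt
        exact_mod_cast (by omega : (k j : ℕ) + 1 ≤ K))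

end sVal

lemma one_div_one_sub_abs_sq_le {S : ℝ → ℝ} {c lam : ℝ} {K d : ℕ} (hc : 0 < c) (hlam : 0 < lam)
    (hd : d ≠ 0) (hK : K ≠ 0) (hcS : ∀ z ∈ Icc (-(4 * d * lam)) 0, c * |z| ≤ 1 - |S z|)
    (k : Fin d → Fin (K - 1)) :
    1 / (1 - |S (sVal K d lam k)|) ^ 2
      ≤ K ^ 4 / (4 * c * lam * d) ^ 2 * ∏ j, 1 / (((k j : ℕ) : ℝ) + 1) ^ (4 / d : ℝ) := by
  have hsum := card_mul_prod_rpow_div_sq_le_sum_sin_sq k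
  set P := ∏ j, (((k j : ℕ) : ℝ) + 1)
  have hP : 0 < P := Finset.prod_pos fun j _ => by positivity
  have hlow : 4 * c * lam * (d * P ^ (2 / d : ℝ) / K ^ 2) ≤ 1 - |S (sVal K d lam k)| := by
    calc 4 * c * lam * (d * P ^ (2 / d : ℝ) / K ^ 2)
        ≤ c * (4 * lam * ∑ j, sin (π * (((k j : ℕ) : ℝ) + 1) / (2 * K)) ^ 2) := by
          linarith [mul_le_mul_of_nonneg_left hsum (by positivity : (0 : ℝ) ≤ 4 * c * lam)]
      _ = c * |sVal K d lam k| := by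
          rw [sVal_eq k hK, abs_neg, abs_of_nonneg (by positivity)]
      _ ≤ _ := hcS _ (sVal_mem_Icc k hlam.le hK)
  have hpow : (P ^ (2 / d : ℝ)) ^ 2 = P ^ (4 / d : ℝ) := by
    rw [← Real.rpow_natCast, ← Real.rpow_mul hP.le]
    ring_nf
  calc 1 / (1 - |S (sVal K d lam k)|) ^ 2
      ≤ 1 / (4 * c * lam * (d * P ^ (2 / d : ℝ) / K ^ 2)) ^ 2 := by
        gcongr
    _ = K ^ 4 / (4 * c * lam * d) ^ 2 / P ^ (4 / d : ℝ) := by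
        rw [← hpow]
        field_simp
    _ = _ := by
        rw [Finset.prod_div_distrib, Finset.prod_const_one,
          Real.finsetProd_rpow _ _ fun j _ => by positivity, div_eq_mul_one_div]

/-- For `d ∈ {1,2,3}`:
`Σ_{k∈{1,…,K−1}^d} 1/(1 − |S(s_k)|)² ≤ C̄² Δt⁻²` with `Δt = λ/K²`. -/
theorem series_bound_squared (d : ℕ) (hd : d = 1 ∨ d = 2 ∨ d = 3)
    (lam : ℝ) (hlam : 0 < lam) (S : ℝ → ℝ)
    (hcont : ContinuousOn S (Set.Icc (-(4 * (d : ℝ) * lam)) 0))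
    (hS0 : S 0 = 1)
    (hSlt : ∀ z ∈ Set.Ico (-(4 * (d : ℝ) * lam)) 0, |S z| < 1)
    (hderiv : HasDerivAt S 1 0) :
    ∃ C > 0, ∀ K : ℕ, 2 ≤ K →
      ∑ k : Fin d → Fin (K - 1), 1 / (1 - |S (sVal K d lam k)|) ^ 2
        ≤ C ^ 2 * ((lam / (K : ℝ) ^ 2)⁻¹) ^ 2 := by
  have hd0 : d ≠ 0 := by omega
  have hp : 1 < (4 / d : ℝ) := by rcases hd with rfl | rfl | rfl <;> norm_num
  obtain ⟨c, hc, hcS⟩ :=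
    exists_pos_mul_abs_le_one_sub_abs (by positivity) hcont hS0 hSlt one_pos hderiv
  set B := ∑' i : ℕ, 1 / ((i : ℝ) + 1) ^ (4 / d : ℝ)
  have hB : 0 < B :=
    (summable_one_div_nat_add_one_rpow hp).tsum_pos (fun _ => by positivity) 0 (by norm_num)
  refine ⟨√(B ^ d) / (4 * c * d), by positivity, fun K hK => ?_⟩
  have hK0 : K ≠ 0 := by omega
  calc ∑ k : Fin d → Fin (K - 1), 1 / (1 - |S (sVal K d lam k)|) ^ 2
      ≤ ∑ k : Fin d → Fin (K - 1), K ^ 4 / (4 * c * lam * d) ^ 2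
          * ∏ j, 1 / (((k j : ℕ) : ℝ) + 1) ^ (4 / d : ℝ) :=
        Finset.sum_le_sum fun k _ => one_div_one_sub_abs_sq_le hc hlam hd0 hK0 hcS k
    _ ≤ K ^ 4 / (4 * c * lam * d) ^ 2 * B ^ d := by
        rw [← Finset.mul_sum]
        gcongr
        exact sum_prod_one_div_rpow_le_tsum_pow hp _ _
    _ = _ := by
        rw [div_pow, sq_sqrt (by positivity)]
        field_simp
end

section
/- Fix integers K ≥ 2, d ≥ 1, a real λ > 0, set Δt = λ/K², and let S : ℝ → ℝ satisfy |S(s_k)| < 1 for every multi-index k ∈ {1,…,K−1}^d. Let ε > 0 and let ε⁰, ε¹, … ∈ ℝ^({1,…,K−1}^d) be vectors with ‖ε^m‖_∞ ≤ ε for all m. Define for n ≥ 1 the global rounding error vector E^n = Σ_{m=0}^{n−1} Σ_{k ∈ {1,…,K−1}^d} (2/K)^d · S(s_k)^{n−1−m} · ⟨ε^m, v_k⟩ · v_k. Then for every n ≥ 1: (a) ‖E^n‖_∞ ≤ 2^d · ε · Σ_k 1/(1 − |S(s_k)|), and (b) the discrete L² norm satisfies ‖E^n‖_{L²}² = K^{−d}‖E^n‖₂²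 ≤ 2^d · ε² · Σ_k 1/(1 − |S(s_k)|)². -/
/-!
Expanded in the sine basis, `E^n = Σ_k a_k v_k` with
`a_k = (2/K)^d Σ_{m<n} S(s_k)^{n-1-m} ⟨ε^m, v_k⟩`. Since `‖v_k‖_∞ ≤ 1`, each inner product is at
most `(K-1)^d ε`, and the geometric series gives `|a_k| ≤ 2^d ε / (1 - |S(s_k)|)`. Bound (a) follows
from `‖v_k‖_∞ ≤ 1` again, and bound (b) from Parseval's identity `‖E^n‖₂² = (K/2)^d Σ_k a_k²`. The
orthogonality of the `v_k` reduces to the one-dimensional identity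
`Σ_{i<K} sin(πip/K) sin(πiq/K) = (K/2) δ_{pq}` for `0 < p, q < K`, which follows from the closed
form `Σ_{i<K} cos(πmi/K) = sin²(πm/2)` for integers `0 < |m| < 2K`.
-/

open Real

/-- The discrete sine eigenvector `v_k` of the `d`-dimensional finite-difference
Laplacian: `(v_k)_i = Π_j sin(π i_j k_j / K)`. -/
noncomputable def vVec (K d : ℕ) (k i : Fin d → Fin (K - 1)) : ℝ :=
  ∏ j, Real.sin (π * (((i j : ℕ) : ℝ) + 1) * (((k j : ℕ) : ℝ) + 1) / K)

open Finset

lemma sin_pi_mul_div_ne_zero {K : ℕ} {m : ℤ} (hm0 : m ≠ 0) (hm : |m| < 2 * K) :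
    sin (π * m / (2 * K)) ≠ 0 := by
  have hm0' : (m : ℝ) ≠ 0 := Int.cast_ne_zero.mpr hm0
  have hm' : |(m : ℝ)| < 2 * K := by exact_mod_cast hm
  have hK : (0 : ℝ) < 2 * K := (abs_pos.mpr hm0').trans hm'
  have hlt : |π * m / (2 * K)| < π := by
    rw [abs_div, abs_mul, abs_of_pos pi_pos, abs_of_pos hK, div_lt_iff₀ hK]
    exact mul_lt_mul_of_pos_left hm' pi_pos
  rw [Ne, sin_eq_zero_iff_of_lt_of_lt (abs_lt.mp hlt).1 (abs_lt.mp hlt).2]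
  exact div_ne_zero (mul_ne_zero pi_ne_zero hm0') hK.ne'

lemma sum_range_cos_pi_mul_div (K : ℕ) (m : ℤ) (hm : sin (π * m / (2 * K)) ≠ 0) :
    ∑ i ∈ range K, cos (π * m / K * i) = sin (π * m / 2) ^ 2 := by
  have hK : (K : ℝ) ≠ 0 := by rintro hK; simp [hK] at hm
  have hsum := sin_mul_sum_cos K (π * m / K) 0
  simp only [add_zero] at hsum
  rw [show π * m / K / 2 = π * m / (2 * K) by ring,
    show (K : ℝ) * (π * m / K) / 2 = π * m / 2 by field_simp,
    show ((K : ℝ) - 1) * (π * m / K) / 2 = π * m / 2 - π * m / (2 * K) by field_simp,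
    cos_sub] at hsum
  have hsin : 2 * sin (π * m / 2) * cos (π * m / 2) = 0 := by
    rw [← sin_two_mul, show 2 * (π * m / 2) = m * π by ring, sin_int_mul_pi]
  refine mul_left_cancel₀ hm ?_
  linear_combination hsum + cos (π * m / (2 * K)) / 2 * hsin

lemma sum_range_sin_mul_sin {K p q : ℕ} (hp : 0 < p) (hpK : p < K) (hq : 0 < q) (hqK : q < K) :
    ∑ i ∈ range K, sin (π * p / K * i) * sin (π * q / K * i)
      = if p = q then (K : ℝ) / 2 else 0 := by
  have product_to_sum : ∀ i : ℕ, sin (π * p / K * i) * sin (π * q / K * i)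
      = (cos (π * ((p - q : ℤ) : ℝ) / K * i) - cos (π * ((p + q : ℤ) : ℝ) / K * i)) / 2 := by
    intro i
    rw [show π * ((p - q : ℤ) : ℝ) / K * i = π * p / K * i - π * q / K * i by push_cast; ring,
      show π * ((p + q : ℤ) : ℝ) / K * i = π * p / K * i + π * q / K * i by push_cast; ring,
      cos_sub, cos_add]
    ring
  have hsin_sq : sin (π * ((p + q : ℤ) : ℝ) / 2) ^ 2 = sin (π * ((p - q : ℤ) : ℝ) / 2) ^ 2 := by
    rw [show π * ((p + q : ℤ) : ℝ) / 2 = π * ((p - q : ℤ) : ℝ) / 2 + q * π by push_cast; ring,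
      sin_add_nat_mul_pi, mul_pow, ← pow_mul, pow_mul', neg_one_sq, one_pow, one_mul]
  rw [sum_congr rfl fun i _ => product_to_sum i, ← sum_div, sum_sub_distrib,
    sum_range_cos_pi_mul_div K (p + q) (sin_pi_mul_div_ne_zero (by omega) (by rw [abs_lt]; omega)),
    hsin_sq]
  split_ifs with hpq
  · subst hpq
    simp
  · rw [sum_range_cos_pi_mul_div K (p - q)
      (sin_pi_mul_div_ne_zero (by omega) (by rw [abs_lt]; omega)), sub_self, zero_div]

lemma sum_fin_sin_mul_sin (K : ℕ) (a b : Fin (K - 1)) :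
    ∑ i : Fin (K - 1), sin (π * ((i : ℕ) + 1) * ((a : ℕ) + 1) / K)
        * sin (π * ((i : ℕ) + 1) * ((b : ℕ) + 1) / K)
      = if a = b then (K : ℝ) / 2 else 0 := by
  have hK : K - 1 + 1 = K := by have := a.isLt; omega
  -- the `i = 0` term of the full sum over `range K` vanishes
  have hshift := sum_range_succ'
    (fun i : ℕ => sin (π * ((a : ℕ) + 1 : ℕ) / K * i) * sin (π * ((b : ℕ) + 1 : ℕ) / K * i)) (K - 1)
  rw [hK, sum_range_sin_mul_sin (by omega) (by omega) (by omega) (by omega)] at hshift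
  simp only [Nat.cast_zero, mul_zero, sin_zero, add_zero, add_left_inj, Fin.val_inj] at hshift
  rw [Fin.sum_univ_eq_sum_range (fun i : ℕ => sin (π * ((i : ℝ) + 1) * ((a : ℕ) + 1) / K)
    * sin (π * ((i : ℝ) + 1) * ((b : ℕ) + 1) / K)), hshift]
  refine sum_congr rfl fun i _ => ?_
  push_cast
  ring_nf

lemma sum_vVec_mul_vVec (K d : ℕ) (k l : Fin d → Fin (K - 1)) :
    ∑ i, vVec K d k i * vVec K d l i = if k = l then ((K : ℝ) / 2) ^ d else 0 := by
  simp_rw [vVec, ← prod_mul_distrib]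
  rw [← Fintype.prod_sum (fun j (x : Fin (K - 1)) =>
    sin (π * (((x : ℕ) : ℝ) + 1) * (((k j : ℕ) : ℝ) + 1) / K)
      * sin (π * (((x : ℕ) : ℝ) + 1) * (((l j : ℕ) : ℝ) + 1) / K))]
  simp_rw [sum_fin_sin_mul_sin, Fintype.prod_ite_zero, prod_const, card_univ, Fintype.card_fin,
    funext_iff]

lemma abs_vVec_le_one (K d : ℕ) (k i : Fin d → Fin (K - 1)) : |vVec K d k i| ≤ 1 := by
  rw [vVec, abs_prod]
  exact prod_le_one (fun _ _ => abs_nonneg _) fun _ _ => abs_sin_le_one _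

section
variable {ι κ : Type*} [Fintype ι] [Fintype κ]

lemma sum_sq_sum_mul_of_orthogonal [DecidableEq κ] {v : κ → ι → ℝ} {N : ℝ}
    (hv : ∀ k l, ∑ i, v k i * v l i = if k = l then N else 0) (g : κ → ℝ) :
    ∑ i, (∑ k, g k * v k i) ^ 2 = N * ∑ k, g k ^ 2 := by
  calc ∑ i, (∑ k, g k * v k i) ^ 2 = ∑ k, ∑ l, g k * g l * ∑ i, v k i * v l i := by
        simp_rw [sq, sum_mul_sum, mul_sum]
        rw [sum_comm]
        refine sum_congr rfl fun k _ => ?_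
        rw [sum_comm]
        refine sum_congr rfl fun l _ => sum_congr rfl fun i _ => by ring
    _ = N * ∑ k, g k ^ 2 := by
        simp_rw [hv, mul_ite, mul_zero, sum_ite_eq, mem_univ, if_true, mul_sum]
        exact sum_congr rfl fun k _ => by ring

lemma abs_sum_mul_le_sum_abs {f w : ι → ℝ} (hw : ∀ i, |w i| ≤ 1) :
    |∑ i, f i * w i| ≤ ∑ i, |f i| :=
  (abs_sum_le_sum_abs _ _).trans <| sum_le_sum fun i _ => by
    rw [abs_mul]; exact mul_le_of_le_one_right (abs_nonneg _) (hw i)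

end

lemma abs_sum_pow_mul_le {c C : ℝ} (hc : |c| < 1) {t : ℕ → ℝ} (ht : ∀ m, |t m| ≤ C) (n : ℕ) :
    |∑ m ∈ range n, c ^ (n - 1 - m) * t m| ≤ C / (1 - |c|) := by
  have hC : 0 ≤ C := (abs_nonneg _).trans (ht 0)
  calc |∑ m ∈ range n, c ^ (n - 1 - m) * t m|
      ≤ ∑ m ∈ range n, |c| ^ (n - 1 - m) * C := by
        refine (abs_sum_le_sum_abs _ _).trans (sum_le_sum fun m _ => ?_)
        rw [abs_mul, abs_pow]
        exact mul_le_mul_of_nonneg_left (ht m) (by positivity)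
    _ = C * ∑ j ∈ range n, |c| ^ j := by
        rw [← sum_range_reflect (|c| ^ ·), mul_sum]
        exact sum_congr rfl fun m _ => mul_comm _ _
    _ ≤ C * (|c| ^ 0 / (1 - |c|)) := by
        rw [range_eq_Ico]
        exact mul_le_mul_of_nonneg_left (geom_sum_Ico_le_of_lt_one (abs_nonneg c) hc) hC
    _ = C / (1 - |c|) := by rw [pow_zero, mul_one_div]

noncomputable def errorCoeff (K d : ℕ) (c : (Fin d → Fin (K - 1)) → ℝ)
    (eps : ℕ → (Fin d → Fin (K - 1)) → ℝ) (n : ℕ) (k : Fin d → Fin (K - 1)) : ℝ :=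
  (2 / (K : ℝ)) ^ d * ∑ m ∈ range n, c k ^ (n - 1 - m) * ∑ i, eps m i * vVec K d k i

lemma sum_errorCoeff_mul_vVec (K d : ℕ) (c : (Fin d → Fin (K - 1)) → ℝ)
    (eps : ℕ → (Fin d → Fin (K - 1)) → ℝ) (n : ℕ) (i : Fin d → Fin (K - 1)) :
    ∑ k, errorCoeff K d c eps n k * vVec K d k i
      = ∑ m ∈ range n, ∑ k, (2 / (K : ℝ)) ^ d * c k ^ (n - 1 - m)
          * (∑ i', eps m i' * vVec K d k i') * vVec K d k i := by
  rw [sum_comm]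
  refine sum_congr rfl fun k _ => ?_
  rw [errorCoeff, mul_sum, sum_mul]
  exact sum_congr rfl fun m _ => by ring

lemma abs_errorCoeff_le {K d : ℕ} (hK : K ≠ 0) {c : (Fin d → Fin (K - 1)) → ℝ}
    {k : Fin d → Fin (K - 1)} (hc : |c k| < 1) {ε : ℝ} (hε : 0 ≤ ε)
    {eps : ℕ → (Fin d → Fin (K - 1)) → ℝ} (heps : ∀ m i, |eps m i| ≤ ε) (n : ℕ) :
    |errorCoeff K d c eps n k| ≤ 2 ^ d * ε / (1 - |c k|) := by
  have hinner : ∀ m, |∑ i, eps m i * vVec K d k i| ≤ (K : ℝ) ^ d * ε := fun m => calc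
    |∑ i, eps m i * vVec K d k i| ≤ ∑ i, |eps m i| := abs_sum_mul_le_sum_abs (abs_vVec_le_one K d k)
    _ ≤ ((K - 1 : ℕ) : ℝ) ^ d * ε := by
        simpa using sum_le_card_nsmul univ _ ε fun i _ => heps m i
    _ ≤ (K : ℝ) ^ d * ε := by gcongr; exact Nat.sub_le K 1
  have hK' : (0 : ℝ) < K := by positivity
  rw [errorCoeff, abs_mul, abs_of_nonneg (by positivity)]
  calc (2 / (K : ℝ)) ^ d * |∑ m ∈ range n, c k ^ (n - 1 - m) * ∑ i, eps m i * vVec K d k i|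
      ≤ (2 / (K : ℝ)) ^ d * ((K : ℝ) ^ d * ε / (1 - |c k|)) := by
        gcongr; exact abs_sum_pow_mul_le hc hinner n
    _ = 2 ^ d * ε / (1 - |c k|) := by
        rw [mul_div_assoc', ← mul_assoc, ← mul_pow, div_mul_cancel₀ _ hK'.ne']

theorem worst_case_global_error_bounds_general (K d : ℕ) (hK : 2 ≤ K)
    (lam : ℝ) (S : ℝ → ℝ)
    (hS : ∀ k : Fin d → Fin (K - 1), |S (sVal K d lam k)| < 1)
    (ε : ℝ) (hε : 0 < ε)
    (eps : ℕ → (Fin d → Fin (K - 1)) → ℝ)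
    (heps : ∀ m i, |eps m i| ≤ ε)
    (E : ℕ → (Fin d → Fin (K - 1)) → ℝ)
    (hE : ∀ n i, E n i = ∑ m ∈ Finset.range n, ∑ k : Fin d → Fin (K - 1),
      (2 / (K : ℝ)) ^ d * S (sVal K d lam k) ^ (n - 1 - m)
        * (∑ i', eps m i' * vVec K d k i') * vVec K d k i)
    (n : ℕ) :
    (∀ i, |E n i| ≤ 2 ^ d * ε
        * ∑ k : Fin d → Fin (K - 1), 1 / (1 - |S (sVal K d lam k)|)) ∧
    ((K : ℝ) ^ d)⁻¹ * ∑ i, E n i ^ 2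
      ≤ 2 ^ d * ε ^ 2
        * ∑ k : Fin d → Fin (K - 1), 1 / (1 - |S (sVal K d lam k)|) ^ 2 := by
  set c := fun k => S (sVal K d lam k)
  set g := errorCoeff K d c eps n
  have hg : ∀ k, |g k| ≤ 2 ^ d * ε / (1 - |c k|) := fun k =>
    abs_errorCoeff_le (by omega) (hS k) hε.le heps n
  have hEn : ∀ i, E n i = ∑ k, g k * vVec K d k i := fun i =>
    (hE n i).trans (sum_errorCoeff_mul_vVec K d c eps n i).symm
  constructor
  · intro i
    rw [hEn, mul_sum]
    refine (abs_sum_mul_le_sum_abs (abs_vVec_le_one K d · i)).trans (sum_le_sum fun k _ => ?_)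
    exact (hg k).trans_eq (by ring)
  · have hK' : (K : ℝ) ≠ 0 := by positivity
    have hscale : ((K : ℝ) ^ d)⁻¹ * ((K : ℝ) / 2) ^ d = ((2 : ℝ) ^ d)⁻¹ := by
      rw [div_pow]; field_simp
    simp_rw [hEn]
    rw [sum_sq_sum_mul_of_orthogonal (sum_vVec_mul_vVec K d), ← mul_assoc, hscale, mul_sum, mul_sum]
    refine sum_le_sum fun k _ => ?_
    calc ((2 : ℝ) ^ d)⁻¹ * g k ^ 2 ≤ ((2 : ℝ) ^ d)⁻¹ * (2 ^ d * ε / (1 - |c k|)) ^ 2 := by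
          have hgk := abs_le.mp (hg k)
          exact mul_le_mul_of_nonneg_left (sq_le_sq' hgk.1 hgk.2) (by positivity)
      _ = 2 ^ d * ε ^ 2 * (1 / (1 - |c k|) ^ 2) := by field_simp

/-- Worst-case bounds for the global rounding error
`E^n = Σ_{m<n} Σ_k (2/K)^d S(s_k)^{n−1−m} ⟨ε^m, v_k⟩ v_k` driven by local
errors bounded entrywise by `ε`:
(a) `‖E^n‖_∞ ≤ 2^d ε Σ_k 1/(1 − |S(s_k)|)`;
(b) `‖E^n‖_{L²}² = K^{−d} ‖E^n‖₂² ≤ 2^d ε² Σ_k 1/(1 − |S(s_k)|)²`. -/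
theorem worst_case_global_error_bounds (K d : ℕ) (hK : 2 ≤ K) (hd : 1 ≤ d)
    (lam : ℝ) (hlam : 0 < lam) (S : ℝ → ℝ)
    (hS : ∀ k : Fin d → Fin (K - 1), |S (sVal K d lam k)| < 1)
    (ε : ℝ) (hε : 0 < ε)
    (eps : ℕ → (Fin d → Fin (K - 1)) → ℝ)
    (heps : ∀ m i, |eps m i| ≤ ε)
    (E : ℕ → (Fin d → Fin (K - 1)) → ℝ)
    (hE : ∀ n i, E n i = ∑ m ∈ Finset.range n, ∑ k : Fin d → Fin (K - 1),
      (2 / (K : ℝ)) ^ d * S (sVal K d lam k) ^ (n - 1 - m)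
        * (∑ i', eps m i' * vVec K d k i') * vVec K d k i)
    (n : ℕ) (hn : 1 ≤ n) :
    (∀ i, |E n i| ≤ 2 ^ d * ε
        * ∑ k : Fin d → Fin (K - 1), 1 / (1 - |S (sVal K d lam k)|)) ∧
    ((K : ℝ) ^ d)⁻¹ * ∑ i, E n i ^ 2
      ≤ 2 ^ d * ε ^ 2
        * ∑ k : Fin d → Fin (K - 1), 1 / (1 - |S (sVal K d lam k)|) ^ 2 :=
  worst_case_global_error_bounds_general K d hK lam S hS ε hε eps heps E hE n
end
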